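/- arXiv:0904.1150 — 2 statements merged into one kernel-verified Lean document; each statement's English description precedes it below -/
import Mathlib

section
/- Sufficient-statistic property of the a posteriori vector (equation (eqnIleftprob)/(eqnIYytoalpha)): For a non-controllable FSC with a source in 𝒫'_v(u,u) (0 ≤ u ≤ v), let t satisfy u+1 ≤ t ≤ N and let y^{t-u-1} and ỹ^{t-u-1} be two output histories of positive probability with α_{t-1}(y^{t-u-1}) = α_{t-1}(ỹ^{t-u-1}). Then for all (x_{t-v}^t, s_{t-v-1}, y_{t-u}^t) (windows truncated for small indices): Pr(X_{t-v}^t = x_{t-v}^t, S_{t-v-1} = s_{t-v-1}, Y_{t-u}^t = y_{t-u}^t | Y^{t-u-1} = y^{t-u-1}) = Pr(X_{t-v}^t = x_{t-v}^t, S_{t-v-1} = s_{t-v-1}, Y_{t-u}^t = y_{t-u}^t | Y^{t-u-1} = ỹ^{t-u-1}). That is, the conditional joint law of (X_{t-v}^t, S_{t-v-1}, Y_{t-u}^t) given the past outputs depends on the past outputs only through the a posteriori vector α_{t-1}. -/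
/-!
Common framework: finite-state channels (FSCs), non-controllable FSCs,
sources with delayed feedback (FB) and delayed state information (SI),
induced joint pmfs, conditional probabilities and conditional mutual
information, following Huang–Kavčić–Ma, "Upper Bounds on the Capacities of
Non-Controllable Finite-State Channels with/without Feedback".

Time convention: for a horizon `N`, the channel inputs are `X_1,…,X_N`
(coordinate `x i` of `x : Fin N → X` is `X_{i+1}`), the states are
`S_0,…,S_N` (coordinate `s j` of `s : Fin (N+1) → S` is `S_j`), and the
outputs are `Y_1,…,Y_N` (coordinate `y i` is `Y_{i+1}`).
-/

open Finset

noncomputable section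

namespace FSCPaper

/-- Probability of an event under a pmf `p` on a finite sample space. -/
def prE {Ω : Type} [Fintype Ω] (p : Ω → ℝ) (E : Set Ω) : ℝ :=
  ∑ ω : Ω, E.indicator p ω

/-- Conditional probability `Pr(E | F)`, a ratio of (sums of) marginals
(with the `0/0 = 0` junk-value convention of real division). -/
def condPr {Ω : Type} [Fintype Ω] (p : Ω → ℝ) (E F : Set Ω) : ℝ :=
  prE p (E ∩ F) / prE p F

/-- The conditional pmf `Pr(· | F)` given an event `F`. -/
def condPMF {Ω : Type} [Fintype Ω] (p : Ω → ℝ) (F : Set Ω) : Ω → ℝ :=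
  fun ω => F.indicator p ω / prE p F

/-- Conditional mutual information `I(A;B|C)` of finite-valued random
variables `fA, fB, fC` under the pmf `p`; zero-probability terms
contribute `0` (the factor in front of the logarithm vanishes). -/
def condMI {Ω A B C : Type} [Fintype Ω] [Fintype A] [Fintype B] [Fintype C]
    (p : Ω → ℝ) (fA : Ω → A) (fB : Ω → B) (fC : Ω → C) : ℝ :=
  ∑ a : A, ∑ b : B, ∑ c : C,
    prE p {ω | fA ω = a ∧ fB ω = b ∧ fC ω = c} *
      Real.log (condPr p {ω | fA ω = a ∧ fB ω = b} {ω | fC ω = c} /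
        (condPr p {ω | fA ω = a} {ω | fC ω = c} *
          condPr p {ω | fB ω = b} {ω | fC ω = c}))

/-- Trajectories `(x_1^N, s_0^N, y_1^N)`. -/
abbrev Traj (X S Y : Type) (N : ℕ) : Type :=
  (Fin N → X) × (Fin (N + 1) → S) × (Fin N → Y)

/-- A general finite-state channel: channel transition kernel
`W(y, s' | x, s)` (a pmf on `Y × S` for each `(x,s)`) and initial state
pmf `init`. -/
structure FSC (X S Y : Type) [Fintype S] [Fintype Y] : Type where
  W : Y → S → X → S → ℝ
  init : S → ℝ
  W_nonneg : ∀ y s' x s, 0 ≤ W y s' x s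
  W_sum : ∀ x s, (∑ y : Y, ∑ s' : S, W y s' x s) = 1
  init_nonneg : ∀ s, 0 ≤ init s
  init_sum : (∑ s : S, init s) = 1

/-- A source without feedback: conditional pmfs `π_t(x_t | x^{t-1})`;
`pol t x a` is the probability that `X_{t+1} = a` given that the previous
inputs are the corresponding coordinates of `x` (by `causal` it depends
only on the coordinates `x j` with `j < t`). -/
structure FFSource (X : Type) [Fintype X] (N : ℕ) : Type where
  pol : Fin N → (Fin N → X) → X → ℝ
  nonneg : ∀ t x a, 0 ≤ pol t x a
  sum_one : ∀ t x, (∑ a : X, pol t x a) = 1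
  causal : ∀ (t : Fin N) (x x' : Fin N → X),
    (∀ j : Fin N, (j : ℕ) < (t : ℕ) → x j = x' j) → pol t x = pol t x'

/-- A non-controllable finite-state channel: output kernel `P(y|x,s)`,
free state-transition kernel `Q(s'|s)`, and initial state pmf `init`. -/
structure NCFSC (X S Y : Type) [Fintype S] [Fintype Y] : Type where
  P : Y → X → S → ℝ
  Q : S → S → ℝ
  init : S → ℝ
  P_nonneg : ∀ y x s, 0 ≤ P y x s
  P_sum : ∀ x s, (∑ y : Y, P y x s) = 1
  Q_nonneg : ∀ s' s, 0 ≤ Q s' s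
  Q_sum : ∀ s, (∑ s' : S, Q s' s) = 1
  init_nonneg : ∀ s, 0 ≤ init s
  init_sum : (∑ s : S, init s) = 1

/-- A source with `u`-delayed feedback and `u`-delayed state information
(the set `𝒫(u,u)`): `pol t x s y a` is
`π_{t+1}(a | x^{t}, s_0^{t-u}, y^{t-u})` in 1-based time; by `causal` it
depends on `(x, s, y)` only through the coordinates
`x_1^{t}` (indices `j < t`), `s_0^{t-u}` (indices `j + u ≤ t`) and
`y_1^{t-u}` (indices `j + u + 1 ≤ t`), i.e. on the past inputs, the
`u`-delayed state information and the `u`-delayed output feedback. -/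
structure Source (X S Y : Type) [Fintype X] [Fintype S] [Fintype Y] (N u : ℕ) : Type where
  pol : Fin N → (Fin N → X) → (Fin (N + 1) → S) → (Fin N → Y) → X → ℝ
  nonneg : ∀ t x s y a, 0 ≤ pol t x s y a
  sum_one : ∀ t x s y, (∑ a : X, pol t x s y a) = 1
  causal : ∀ (t : Fin N) (x x' : Fin N → X) (s s' : Fin (N + 1) → S) (y y' : Fin N → Y),
    (∀ j : Fin N, (j : ℕ) < (t : ℕ) → x j = x' j) →
    (∀ j : Fin (N + 1), (j : ℕ) + u ≤ (t : ℕ) → s j = s' j) →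
    (∀ j : Fin N, (j : ℕ) + u + 1 ≤ (t : ℕ) → y j = y' j) →
    pol t x s y = pol t x' s' y'

variable {X S Y : Type} [Fintype X] [Fintype S] [Fintype Y]

/-- Joint pmf induced by a general FSC and a feedforward source:
`Pr(x^N, s_0^N, y^N) = μ(s_0) ∏_t π_t(x_t|x^{t-1}) W(y_t, s_t | x_t, s_{t-1})`. -/
def jointP0 {N : ℕ} (ch : FSC X S Y) (src : FFSource X N) (ω : Traj X S Y N) : ℝ :=
  ch.init (ω.2.1 0) *
    ∏ i : Fin N,
      src.pol i ω.1 (ω.1 i) *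
        ch.W (ω.2.2 i) (ω.2.1 i.succ) (ω.1 i) (ω.2.1 i.castSucc)

/-- Joint channel transition `W(y, s' | x, s) = P(y|x,s) · Q(s'|s)` of a
non-controllable FSC. -/
def NCFSC.W (ch : NCFSC X S Y) (y : Y) (s' : S) (x : X) (s : S) : ℝ :=
  ch.P y x s * ch.Q s' s

/-- Joint pmf induced by a non-controllable FSC and a source in `𝒫(u,u)`:
`Pr(x^N, s_0^N, y^N) = μ(s_0) ∏_t π_t(x_t|x^{t-1},s_0^{t-u-1},y^{t-u-1}) W(y_t,s_t|x_t,s_{t-1})`. -/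
def jointP {N u : ℕ} (ch : NCFSC X S Y) (src : Source X S Y N u) (ω : Traj X S Y N) : ℝ :=
  ch.init (ω.2.1 0) *
    ∏ i : Fin N,
      src.pol i ω.1 ω.2.1 ω.2.2 (ω.1 i) *
        ch.W (ω.2.2 i) (ω.2.1 i.succ) (ω.1 i) (ω.2.1 i.castSucc)

/-- A source in `𝒫(u,u)` is a `v`-th order conditional Markov source
(the set `𝒫_v(u,u)`) if each policy depends on its arguments only through
`(x_{t-v}^{t-1}, s_{t-v-1}^{t-u-1}, y^{t-u-1})` (windows truncated for
small `t`). -/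
def IsMarkov {N u : ℕ} (v : ℕ) (src : Source X S Y N u) : Prop :=
  ∀ (t : Fin N) (x x' : Fin N → X) (s s' : Fin (N + 1) → S) (y y' : Fin N → Y),
    (∀ j : Fin N, (t : ℕ) ≤ (j : ℕ) + v ∧ (j : ℕ) < (t : ℕ) → x j = x' j) →
    (∀ j : Fin (N + 1), (t : ℕ) ≤ (j : ℕ) + v ∧ (j : ℕ) + u ≤ (t : ℕ) → s j = s' j) →
    (∀ j : Fin N, (j : ℕ) + u + 1 ≤ (t : ℕ) → y j = y' j) →
    src.pol t x s y = src.pol t x' s' y'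

/-- `Σ_{t=1}^N I(X^t, S_0^{t-v-1}; Y_t | Y^{t-1})` under the joint law of
the source (state window omitted/truncated when `t - v - 1 < 0`). -/
def objFull {N u : ℕ} (v : ℕ) (ch : NCFSC X S Y) (src : Source X S Y N u) : ℝ :=
  ∑ t : Fin N,
    condMI (jointP ch src)
      (fun ω : Traj X S Y N =>
        ((fun j : {j : Fin N // (j : ℕ) ≤ (t : ℕ)} => ω.1 j.1),
          fun j : {j : Fin (N + 1) // (j : ℕ) + v ≤ (t : ℕ)} => ω.2.1 j.1))
      (fun ω => ω.2.2 t)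
      (fun ω => fun j : {j : Fin N // (j : ℕ) < (t : ℕ)} => ω.2.2 j.1)

/-- `Σ_{t=1}^N I(X_{t-v}^t, S_{t-v-1}; Y_t | Y^{t-1})` under the joint law
of the source (windows truncated for small `t`; the singleton state window
`S_{t-v-1}` is encoded by the condition `j + v = t - 1` in 0-based time and
is empty for `t ≤ v`). -/
def objWin {N u : ℕ} (v : ℕ) (ch : NCFSC X S Y) (src : Source X S Y N u) : ℝ :=
  ∑ t : Fin N,
    condMI (jointP ch src)
      (fun ω : Traj X S Y N =>
        ((fun j : {j : Fin N // (t : ℕ) ≤ (j : ℕ) + v ∧ (j : ℕ) ≤ (t : ℕ)} => ω.1 j.1),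
          fun j : {j : Fin (N + 1) // (j : ℕ) + v = (t : ℕ)} => ω.2.1 j.1))
      (fun ω => ω.2.2 t)
      (fun ω => fun j : {j : Fin N // (j : ℕ) < (t : ℕ)} => ω.2.2 j.1)

/-- Directed information `I(X^N → Y^N) = Σ_{t=1}^N I(X^t; Y_t | Y^{t-1})`. -/
def directedInfo {N u : ℕ} (ch : NCFSC X S Y) (src : Source X S Y N u) : ℝ :=
  ∑ t : Fin N,
    condMI (jointP ch src)
      (fun ω : Traj X S Y N => fun j : {j : Fin N // (j : ℕ) ≤ (t : ℕ)} => ω.1 j.1)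
      (fun ω => ω.2.2 t)
      (fun ω => fun j : {j : Fin N // (j : ℕ) < (t : ℕ)} => ω.2.2 j.1)

/-- The a posteriori vectors `α_{t-1}(y^{t-u-1})` and `α_{t-1}(ỹ^{t-u-1})`
(at the 1-based time `(t:ℕ)+1`) induced by the two output histories `yh`
and `yh'` coincide: for all window values `(x_{t-v}^{t-1}, s_{t-v-1}^{t-u-1})`
the two a posteriori probabilities agree. -/
def alphaWinEq {N u : ℕ} (v : ℕ) (ch : NCFSC X S Y) (src : Source X S Y N u)
    (t : Fin N) (yh yh' : Fin N → Y) : Prop :=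
  ∀ (xf : Fin N → X) (sf : Fin (N + 1) → S),
    condPr (jointP ch src)
        {ω : Traj X S Y N |
          (∀ j : Fin N, (t : ℕ) ≤ (j : ℕ) + v ∧ (j : ℕ) < (t : ℕ) → ω.1 j = xf j) ∧
            ∀ j : Fin (N + 1), (t : ℕ) ≤ (j : ℕ) + v ∧ (j : ℕ) + u ≤ (t : ℕ) → ω.2.1 j = sf j}
        {ω : Traj X S Y N | ∀ j : Fin N, (j : ℕ) + u + 1 ≤ (t : ℕ) → ω.2.2 j = yh j} =
      condPr (jointP ch src)
        {ω : Traj X S Y N |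
          (∀ j : Fin N, (t : ℕ) ≤ (j : ℕ) + v ∧ (j : ℕ) < (t : ℕ) → ω.1 j = xf j) ∧
            ∀ j : Fin (N + 1), (t : ℕ) ≤ (j : ℕ) + v ∧ (j : ℕ) + u ≤ (t : ℕ) → ω.2.1 j = sf j}
        {ω : Traj X S Y N | ∀ j : Fin N, (j : ℕ) + u + 1 ≤ (t : ℕ) → ω.2.2 j = yh' j}

/-- The set `𝒫'_v(u,u)`: the policy at each time gives the same value on
any two positive-probability output histories inducing the same a
posteriori vector. -/
def AlphaPolicy {N u : ℕ} (v : ℕ) (ch : NCFSC X S Y) (src : Source X S Y N u) : Prop :=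
  ∀ (t : Fin N) (yh yh' : Fin N → Y),
    0 < prE (jointP ch src)
        {ω : Traj X S Y N | ∀ j : Fin N, (j : ℕ) + u + 1 ≤ (t : ℕ) → ω.2.2 j = yh j} →
    0 < prE (jointP ch src)
        {ω : Traj X S Y N | ∀ j : Fin N, (j : ℕ) + u + 1 ≤ (t : ℕ) → ω.2.2 j = yh' j} →
    alphaWinEq v ch src t yh yh' →
    ∀ (xf : Fin N → X) (sf : Fin (N + 1) → S) (a : X),
      src.pol t xf sf yh a = src.pol t xf sf yh' a

end FSCPaper

/-!
In the paper's 1-based time (the code's `t` is the paper's `t - 1`): summing out the future,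
the first `t` channel uses have weight `prefixWeight`, which splits as `headWeight * tailWeight`
with tail factor `π_t(x_t | …) ∏_{i=t-u}^{t} W(y_i, s_i | x_i, s_{i-1})`.
Besides the coordinates it owns, this factor reads only the window
`(X_{t-v}^{t-1}, S_{t-v-1}^{t-u-1})` (Markov source) and the output history, and on the two
histories `y`, `ỹ` it agrees (source in `𝒫'_v(u,u)`). So exchanging the tails of two
trajectories with the same window, one compatible with each history, preserves the product of
their weights, whence for the target event `E` and every window value `w`
`Pr(E, W = w | y) · Pr(W = w | ỹ) = Pr(E, W = w | ỹ) · Pr(W = w | y)`.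
Summing over the state part of `w` and using `Pr(W = w | y) = Pr(W = w | ỹ)`, i.e.
`α_{t-1}(y) = α_{t-1}(ỹ)`, gives the theorem.
-/

namespace FSCPaper

section FinitePMF

variable {Ω : Type} [Fintype Ω]

theorem prE_nonneg {p : Ω → ℝ} (hp : ∀ ω, 0 ≤ p ω) (A : Set Ω) : 0 ≤ prE p A :=
  Finset.sum_nonneg fun ω _ => Set.indicator_nonneg (fun ω _ => hp ω) ω

theorem prE_mono {p : Ω → ℝ} (hp : ∀ ω, 0 ≤ p ω) {A B : Set Ω} (hAB : A ⊆ B) :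
    prE p A ≤ prE p B :=
  Finset.sum_le_sum fun ω _ => Set.indicator_le_indicator_of_subset hAB hp ω

theorem prE_eq_sum_prE_inter_preimage {κ : Type} [Fintype κ] (p : Ω → ℝ)
    (f : Ω → κ) (A : Set Ω) : prE p A = ∑ k, prE p (A ∩ f ⁻¹' {k}) := by
  classical
  unfold prE
  rw [← Finset.sum_fiberwise Finset.univ f]
  refine Finset.sum_congr rfl fun k _ => ?_
  rw [Finset.sum_filter]
  refine Finset.sum_congr rfl fun ω _ => ?_
  by_cases h : f ω = k <;> simp [h, Set.indicator_apply]

theorem prE_mul_prE_eq_of_involutive (p : Ω → ℝ) {A B A' B' : Set Ω} (φ : Ω × Ω → Ω × Ω)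
    (hφ : Function.Involutive φ) (hmaps : ∀ z ∈ A ×ˢ B, φ z ∈ A' ×ˢ B')
    (hmaps' : ∀ z ∈ A' ×ˢ B', φ z ∈ A ×ˢ B)
    (hp : ∀ z ∈ A ×ˢ B, p (φ z).1 * p (φ z).2 = p z.1 * p z.2) :
    prE p A * prE p B = prE p A' * prE p B' := by
  classical
  have hprod : ∀ C D : Set Ω, prE p C * prE p D =
      ∑ z : Ω × Ω, if z ∈ C ×ˢ D then p z.1 * p z.2 else 0 := by
    intro C D
    rw [prE, prE, Finset.sum_mul_sum, ← Fintype.sum_prod_type']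
    refine Finset.sum_congr rfl fun z _ => ?_
    by_cases h1 : z.1 ∈ C <;> by_cases h2 : z.2 ∈ D <;> simp [h1, h2, Set.mem_prod]
  rw [hprod, hprod, ← Equiv.sum_comp hφ.toPerm (fun z => if z ∈ A' ×ˢ B' then _ else 0)]
  refine Finset.sum_congr rfl fun z _ => ?_
  simp only [Function.Involutive.coe_toPerm]
  by_cases hz : z ∈ A ×ˢ B
  · simp only [hz, hmaps z hz, hp z hz, if_true]
  · have hφz : φ z ∉ A' ×ˢ B' := fun h => hz (hφ z ▸ hmaps' (φ z) h)
    simp only [hz, hφz, if_false]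

theorem mul_eq_mul_of_cross_mul_eq {a a' w w' f f' : ℝ} (hf' : 0 < f') (ha : 0 ≤ a)
    (ha' : 0 ≤ a') (haw : a ≤ w) (haw' : a' ≤ w') (hcross : a * w' = a' * w)
    (hw : w * f' = w' * f) : a * f' = a' * f := by
  rcases (ha'.trans haw').eq_or_lt with hw' | hw'
  · have hw0 : w = 0 :=
      (mul_eq_zero.mp (by rw [hw, ← hw', zero_mul] : w * f' = 0)).resolve_right hf'.ne'
    rw [le_antisymm (hw0 ▸ haw) ha, le_antisymm (hw' ▸ haw') ha', zero_mul, zero_mul]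
  · refine mul_right_cancel₀ hw'.ne' ?_
    linear_combination f' * hcross + a' * hw

end FinitePMF

variable {X S Y : Type} {N u : ℕ}

section Trajectories

def AgreeBefore (m : ℕ) (ρ ω : Traj X S Y N) : Prop :=
  (∀ j : Fin N, (j : ℕ) < m → ρ.1 j = ω.1 j) ∧
    (∀ j : Fin (N + 1), (j : ℕ) ≤ m → ρ.2.1 j = ω.2.1 j) ∧
      ∀ j : Fin N, (j : ℕ) < m → ρ.2.2 j = ω.2.2 j

theorem AgreeBefore.symm {m : ℕ} {ρ ω : Traj X S Y N} (h : AgreeBefore m ρ ω) :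
    AgreeBefore m ω ρ :=
  ⟨fun j hj => (h.1 j hj).symm, fun j hj => (h.2.1 j hj).symm, fun j hj => (h.2.2 j hj).symm⟩

theorem AgreeBefore.mono {m m' : ℕ} (hm : m' ≤ m) {ρ ω : Traj X S Y N}
    (h : AgreeBefore m ρ ω) : AgreeBefore m' ρ ω :=
  ⟨fun j hj => h.1 j (by omega), fun j hj => h.2.1 j (by omega), fun j hj => h.2.2 j (by omega)⟩

theorem AgreeBefore.trans {m : ℕ} {ρ σ ω : Traj X S Y N} (h : AgreeBefore m ρ σ)
    (h' : AgreeBefore m σ ω) : AgreeBefore m ρ ω :=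
  ⟨fun j hj => (h.1 j hj).trans (h'.1 j hj), fun j hj => (h.2.1 j hj).trans (h'.2.1 j hj),
    fun j hj => (h.2.2 j hj).trans (h'.2.2 j hj)⟩

theorem agreeBefore_self (m : ℕ) (ρ : Traj X S Y N) : AgreeBefore m ρ ρ :=
  ⟨fun _ _ => rfl, fun _ _ => rfl, fun _ _ => rfl⟩

theorem agreeBefore_N_iff {ρ ω : Traj X S Y N} : AgreeBefore N ρ ω ↔ ρ = ω := by
  refine ⟨fun ⟨hx, hs, hy⟩ => ?_, fun h => h ▸ agreeBefore_self N ρ⟩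
  exact Prod.ext (funext fun j => hx j j.isLt)
    (Prod.ext (funext fun j => hs j (Nat.lt_succ_iff.mp j.isLt)) (funext fun j => hy j j.isLt))

def setStep (i : Fin N) (a : X) (b : Y) (c : S) (ρ : Traj X S Y N) : Traj X S Y N :=
  (Function.update ρ.1 i a, Function.update ρ.2.1 i.succ c, Function.update ρ.2.2 i b)

theorem agreeBefore_setStep (i : Fin N) (a : X) (b : Y) (c : S) (ρ : Traj X S Y N) :
    AgreeBefore i (setStep i a b c ρ) ρ := by
  refine ⟨fun j hj => ?_, fun j hj => ?_, fun j hj => ?_⟩ <;>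
    refine Function.update_of_ne (fun h => ?_) _ _ <;> subst h <;> simp at hj

theorem agreeBefore_succ_setStep_iff (i : Fin N) (a : X) (b : Y) (c : S)
    (ρ ω : Traj X S Y N) :
    AgreeBefore (i + 1) (setStep i a b c ρ) ω ↔
      AgreeBefore i ρ ω ∧ (ω.1 i, ω.2.2 i, ω.2.1 i.succ) = (a, b, c) := by
  constructor
  · intro h
    refine ⟨(agreeBefore_setStep i a b c ρ).symm.trans (h.mono (Nat.le_succ _)), ?_⟩
    have hx := h.1 i (by simp)
    have hs := h.2.1 i.succ (by simp)
    have hy := h.2.2 i (by simp)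
    simp only [setStep, Function.update_self] at hx hs hy
    rw [← hx, ← hs, ← hy]
  · rintro ⟨⟨hx, hs, hy⟩, hslot⟩
    obtain ⟨rfl, rfl, rfl⟩ := Prod.mk.injEq _ _ _ _ ▸ hslot
    refine ⟨fun j hj => ?_, fun j hj => ?_, fun j hj => ?_⟩ <;>
      simp only [setStep, Function.update_apply] <;> split_ifs with h
    · rw [h]
    · exact hx j (by have := Fin.val_ne_of_ne h; omega)
    · rw [h]
    · exact hs j (by have := Fin.val_ne_of_ne h; simp at this; omega)
    · rw [h]
    · exact hy j (by have := Fin.val_ne_of_ne h; omega)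

def splicePrefix (m : ℕ) (σ ρ : Traj X S Y N) : Traj X S Y N :=
  (fun j => if (j : ℕ) < m then σ.1 j else ρ.1 j,
    fun j => if (j : ℕ) ≤ m then σ.2.1 j else ρ.2.1 j,
    fun j => if (j : ℕ) < m then σ.2.2 j else ρ.2.2 j)

theorem agreeBefore_splicePrefix (m : ℕ) (σ ρ : Traj X S Y N) :
    AgreeBefore m (splicePrefix m σ ρ) σ :=
  ⟨fun _ hj => if_pos hj, fun _ hj => if_pos hj, fun _ hj => if_pos hj⟩

theorem splicePrefix_splicePrefix_of_agreeBefore {m : ℕ} {σ σ' ρ : Traj X S Y N}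
    (h : AgreeBefore m ρ σ) : splicePrefix m σ (splicePrefix m σ' ρ) = ρ := by
  obtain ⟨hx, hs, hy⟩ := h
  refine Prod.ext (funext fun j => ?_) (Prod.ext (funext fun j => ?_) (funext fun j => ?_)) <;>
    simp only [splicePrefix] <;> split_ifs with hj
  exacts [(hx j hj).symm, rfl, (hs j hj).symm, rfl, (hy j hj).symm, rfl]

def DeterminedBefore (m : ℕ) (A : Set (Traj X S Y N)) : Prop :=
  ∀ ρ ω, AgreeBefore m ρ ω → ρ ∈ A → ω ∈ A

theorem DeterminedBefore.inter {m : ℕ} {A B : Set (Traj X S Y N)} (hA : DeterminedBefore m A)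
    (hB : DeterminedBefore m B) : DeterminedBefore m (A ∩ B) :=
  fun ρ ω h hρ => ⟨hA ρ ω h hρ.1, hB ρ ω h hρ.2⟩

end Trajectories

section Events

variable (t : Fin N) (u v : ℕ)

def histEvent (yh : Fin N → Y) : Set (Traj X S Y N) :=
  {ω | ∀ j : Fin N, (j : ℕ) + u + 1 ≤ (t : ℕ) → ω.2.2 j = yh j}

def windowEvent (xf : Fin N → X) (sf : Fin (N + 1) → S) : Set (Traj X S Y N) :=
  {ω | (∀ j : Fin N, (t : ℕ) ≤ (j : ℕ) + v ∧ (j : ℕ) < (t : ℕ) → ω.1 j = xf j) ∧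
    ∀ j : Fin (N + 1), (t : ℕ) ≤ (j : ℕ) + v ∧ (j : ℕ) + u ≤ (t : ℕ) → ω.2.1 j = sf j}

def targetEvent (xf : Fin N → X) (sf : Fin (N + 1) → S) (yb : Fin N → Y) :
    Set (Traj X S Y N) :=
  {ω | (∀ j : Fin N, (t : ℕ) ≤ (j : ℕ) + v ∧ (j : ℕ) ≤ (t : ℕ) → ω.1 j = xf j) ∧
    (∀ j : Fin (N + 1), (j : ℕ) + v = (t : ℕ) → ω.2.1 j = sf j) ∧
      ∀ j : Fin N, (t : ℕ) ≤ (j : ℕ) + u ∧ (j : ℕ) ≤ (t : ℕ) → ω.2.2 j = yb j}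

variable {t u v}

theorem mem_windowEvent_comm {ρ τ : Traj X S Y N} :
    ρ ∈ windowEvent t u v τ.1 τ.2.1 ↔ τ ∈ windowEvent t u v ρ.1 ρ.2.1 := by
  simp only [windowEvent, Set.mem_ofPred_eq, eq_comm]

theorem mem_windowEvent_of_mem {xf : Fin N → X} {sf : Fin (N + 1) → S} {ρ τ : Traj X S Y N}
    (hρ : ρ ∈ windowEvent t u v xf sf) (hτ : τ ∈ windowEvent t u v xf sf) :
    ρ ∈ windowEvent t u v τ.1 τ.2.1 :=
  ⟨fun j hj => (hρ.1 j hj).trans (hτ.1 j hj).symm,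
    fun j hj => (hρ.2 j hj).trans (hτ.2 j hj).symm⟩

theorem determinedBefore_histEvent (yh : Fin N → Y) :
    DeterminedBefore (t + 1) (histEvent t u yh : Set (Traj X S Y N)) :=
  fun _ _ h hρ j hj => (h.2.2 j (by omega)).symm.trans (hρ j hj)

theorem determinedBefore_windowEvent (xf : Fin N → X) (sf : Fin (N + 1) → S) :
    DeterminedBefore (t + 1) (windowEvent t u v xf sf : Set (Traj X S Y N)) :=
  fun _ _ h hρ => ⟨fun j hj => (h.1 j (by omega)).symm.trans (hρ.1 j hj),
    fun j hj => (h.2.1 j (by omega)).symm.trans (hρ.2 j hj)⟩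

theorem determinedBefore_targetEvent (xf : Fin N → X) (sf : Fin (N + 1) → S)
    (yb : Fin N → Y) :
    DeterminedBefore (t + 1) (targetEvent t u v xf sf yb : Set (Traj X S Y N)) :=
  fun _ _ h hρ => ⟨fun j hj => (h.1 j (by omega)).symm.trans (hρ.1 j hj),
    fun j hj => (h.2.1 j (by omega)).symm.trans (hρ.2.1 j hj),
    fun j hj => (h.2.2 j (by omega)).symm.trans (hρ.2.2 j hj)⟩

theorem targetEvent_inter_stateWindow (xf : Fin N → X) (sf : Fin (N + 1) → S) (yb : Fin N → Y)
    (g : {j : Fin (N + 1) // (t : ℕ) ≤ (j : ℕ) + v ∧ (j : ℕ) + u ≤ (t : ℕ)} → S) :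
    targetEvent t u v xf sf yb ∩ {ω | (fun j => ω.2.1 j.1) = g} =
      targetEvent t u v xf sf yb ∩ windowEvent t u v xf (Function.extend Subtype.val g sf) := by
  ext ω
  simp only [Set.mem_inter_iff, Set.mem_ofPred_eq, windowEvent, funext_iff, Subtype.forall]
  refine and_congr_right fun hω =>
    ⟨fun h => ⟨fun j hj => hω.1 j ⟨hj.1, hj.2.le⟩, fun j hj => ?_⟩, fun h j hj => ?_⟩
  · exact (h j hj).trans (Subtype.val_injective.extend_apply g sf ⟨j, hj⟩).symm
  · exact (h.2 j hj).trans (Subtype.val_injective.extend_apply g sf ⟨j, hj⟩)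

end Events

section ReplaceTail

variable {t : Fin N} {u v : ℕ}

variable (t u) in
/-- `ρ` with the coordinates that `tailWeight` reads outside the a posteriori window, and all
later ones, taken from `τ`; `headWeight` reads none of them. -/
def replaceTail (ρ τ : Traj X S Y N) : Traj X S Y N :=
  (fun j => if (t : ℕ) ≤ (j : ℕ) then τ.1 j else ρ.1 j,
    fun j => if (t : ℕ) < (j : ℕ) + u then τ.2.1 j else ρ.2.1 j,
    fun j => if (t : ℕ) ≤ (j : ℕ) + u then τ.2.2 j else ρ.2.2 j)

theorem replaceTail_replaceTail (ρ τ : Traj X S Y N) :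
    replaceTail t u (replaceTail t u ρ τ) (replaceTail t u τ ρ) = ρ := by
  refine Prod.ext (funext fun j => ?_) (Prod.ext (funext fun j => ?_) (funext fun j => ?_)) <;>
    simp only [replaceTail] <;> split_ifs <;> rfl

theorem agreeBefore_replaceTail {m : ℕ} (hm : m + u ≤ t) (ρ τ : Traj X S Y N) :
    AgreeBefore m (replaceTail t u ρ τ) ρ :=
  ⟨fun _ hj => if_neg (by omega), fun _ hj => if_neg (by omega), fun _ hj => if_neg (by omega)⟩

theorem replaceTail_mem_histEvent {yh : Fin N → Y} {ρ : Traj X S Y N}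
    (hρ : ρ ∈ histEvent t u yh) (τ : Traj X S Y N) :
    replaceTail t u ρ τ ∈ histEvent t u yh :=
  fun j hj => (if_neg (by omega)).trans (hρ j hj)

theorem replaceTail_mem_windowEvent {xf : Fin N → X} {sf : Fin (N + 1) → S} {ρ : Traj X S Y N}
    (hρ : ρ ∈ windowEvent t u v xf sf) (τ : Traj X S Y N) :
    replaceTail t u ρ τ ∈ windowEvent t u v xf sf :=
  ⟨fun j hj => (if_neg (by omega)).trans (hρ.1 j hj),
    fun j hj => (if_neg (by omega)).trans (hρ.2 j hj)⟩

theorem replaceTail_mem_targetEvent (huv : u ≤ v) {xf : Fin N → X} {sf sg : Fin (N + 1) → S}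
    {yb : Fin N → Y} {ρ τ : Traj X S Y N} (hρ : ρ ∈ windowEvent t u v xf sg)
    (hτ : τ ∈ targetEvent t u v xf sf yb ∩ windowEvent t u v xf sg) :
    replaceTail t u ρ τ ∈ targetEvent t u v xf sf yb := by
  obtain ⟨⟨hτx, hτs, hτy⟩, -, hτw⟩ := hτ
  refine ⟨fun j hj => ?_, fun j hj => ?_, fun j hj => (if_pos hj.1).trans (hτy j hj)⟩
  · simp only [replaceTail]
    split_ifs with h
    exacts [hτx j hj, hρ.1 j ⟨hj.1, by omega⟩]
  · have hwin : (t : ℕ) ≤ (j : ℕ) + v ∧ (j : ℕ) + u ≤ t := by omega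
    exact (if_neg (by omega)).trans ((hρ.2 j hwin).trans ((hτw j hwin).symm.trans (hτs j hj)))

theorem replaceTail_swap_mem (huv : u ≤ v) {xf : Fin N → X} {sf sg : Fin (N + 1) → S}
    {yb y₁ y₂ : Fin N → Y} {ρ τ : Traj X S Y N}
    (hρ : ρ ∈ targetEvent t u v xf sf yb ∩ windowEvent t u v xf sg ∩ histEvent t u y₁)
    (hτ : τ ∈ windowEvent t u v xf sg ∩ histEvent t u y₂) :
    replaceTail t u τ ρ ∈
        targetEvent t u v xf sf yb ∩ windowEvent t u v xf sg ∩ histEvent t u y₂ ∧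
      replaceTail t u ρ τ ∈ windowEvent t u v xf sg ∩ histEvent t u y₁ :=
  ⟨⟨⟨replaceTail_mem_targetEvent huv hτ.1 hρ.1, replaceTail_mem_windowEvent hτ.1 ρ⟩,
    replaceTail_mem_histEvent hτ.2 ρ⟩,
    replaceTail_mem_windowEvent hρ.1.2 τ, replaceTail_mem_histEvent hρ.2 τ⟩

end ReplaceTail

variable [Fintype X] [Fintype S] [Fintype Y]

section Marginalization

open scoped Classical

variable (ch : NCFSC X S Y) (src : Source X S Y N u)

def stepWeight (i : Fin N) (ω : Traj X S Y N) : ℝ :=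
  src.pol i ω.1 ω.2.1 ω.2.2 (ω.1 i) *
    ch.W (ω.2.2 i) (ω.2.1 i.succ) (ω.1 i) (ω.2.1 i.castSucc)

def prefixWeight (m : ℕ) (ω : Traj X S Y N) : ℝ :=
  ch.init (ω.2.1 0) * ∏ i : Fin N, if (i : ℕ) < m then stepWeight ch src i ω else 1

theorem stepWeight_nonneg (i : Fin N) (ω : Traj X S Y N) : 0 ≤ stepWeight ch src i ω :=
  mul_nonneg (src.nonneg _ _ _ _ _) (mul_nonneg (ch.P_nonneg _ _ _) (ch.Q_nonneg _ _))

theorem stepWeight_congr (i : Fin N) {ρ ω : Traj X S Y N} (h : AgreeBefore (i + 1) ρ ω) :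
    stepWeight ch src i ρ = stepWeight ch src i ω := by
  obtain ⟨hx, hs, hy⟩ := h
  unfold stepWeight
  rw [src.causal i ρ.1 ω.1 ρ.2.1 ω.2.1 ρ.2.2 ω.2.2 (fun j hj => hx j (by omega))
      (fun j hj => hs j (by omega)) (fun j hj => hy j (by omega)),
    hx i (by omega), hy i (by omega), hs i.succ (by simp), hs i.castSucc (by simp)]

theorem prefixWeight_nonneg (m : ℕ) (ω : Traj X S Y N) : 0 ≤ prefixWeight ch src m ω :=
  mul_nonneg (ch.init_nonneg _) (Finset.prod_nonneg fun i _ => by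
    split_ifs
    exacts [stepWeight_nonneg ch src i ω, zero_le_one])

theorem prefixWeight_congr {m : ℕ} {ρ ω : Traj X S Y N} (h : AgreeBefore m ρ ω) :
    prefixWeight ch src m ρ = prefixWeight ch src m ω := by
  unfold prefixWeight
  rw [h.2.1 0 (Nat.zero_le _)]
  congr 1
  refine Finset.prod_congr rfl fun i _ => ?_
  split_ifs with hi
  exacts [stepWeight_congr ch src i (h.mono hi), rfl]

theorem prefixWeight_succ (i : Fin N) (ω : Traj X S Y N) :
    prefixWeight ch src (i + 1) ω = prefixWeight ch src i ω * stepWeight ch src i ω := by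
  have hsplit : ∀ j : Fin N, (if (j : ℕ) < i + 1 then stepWeight ch src j ω else 1) =
      (if (j : ℕ) < i then stepWeight ch src j ω else 1) *
        if j = i then stepWeight ch src j ω else 1 := by
    intro j
    rcases lt_trichotomy (j : ℕ) i with h | h | h
    · simp [h, h.trans (lt_add_one _), Fin.ne_of_lt h]
    · simp [Fin.ext h]
    · simp [h.not_gt, (Fin.lt_def.mpr h).ne', show ¬ (j : ℕ) < i + 1 by omega]
  unfold prefixWeight
  simp only [hsplit, Finset.prod_mul_distrib, Finset.prod_ite_eq', Finset.mem_univ, if_true,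
    mul_assoc]

theorem prefixWeight_N_eq_jointP (ω : Traj X S Y N) :
    prefixWeight ch src N ω = jointP ch src ω := by
  unfold prefixWeight jointP stepWeight
  simp only [Fin.is_lt, if_true]

theorem stepWeight_setStep (i : Fin N) (a : X) (b : Y) (c : S) (ρ : Traj X S Y N) :
    stepWeight ch src i (setStep i a b c ρ) =
      src.pol i ρ.1 ρ.2.1 ρ.2.2 a *
        (ch.P b a (ρ.2.1 i.castSucc) * ch.Q c (ρ.2.1 i.castSucc)) := by
  obtain ⟨hx, hs, hy⟩ := agreeBefore_setStep i a b c ρ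
  unfold stepWeight NCFSC.W
  rw [src.causal i _ ρ.1 _ ρ.2.1 _ ρ.2.2 hx (fun j hj => hs j (by omega))
    (fun j hj => hy j (by omega)), hs i.castSucc (by simp)]
  simp [setStep]

theorem sum_stepWeight_setStep (i : Fin N) (ρ : Traj X S Y N) :
    ∑ a : X, ∑ b : Y, ∑ c : S, stepWeight ch src i (setStep i a b c ρ) = 1 := by
  simp only [stepWeight_setStep, ← Finset.mul_sum, ch.Q_sum, ch.P_sum, mul_one, src.sum_one]

theorem sum_jointP_agreeBefore {m : ℕ} (hm : m ≤ N) (ρ : Traj X S Y N) :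
    ∑ ω with AgreeBefore m ρ ω, jointP ch src ω = prefixWeight ch src m ρ := by
  induction hm using Nat.decreasingInduction generalizing ρ with
  | self =>
    simp only [agreeBefore_N_iff, Finset.filter_eq, Finset.mem_univ, if_true,
      Finset.sum_singleton, prefixWeight_N_eq_jointP]
  | of_succ k hk ih =>
    set i : Fin N := ⟨k, hk⟩
    calc ∑ ω with AgreeBefore k ρ ω, jointP ch src ω
        = ∑ abc : X × Y × S,
            ∑ ω with AgreeBefore k ρ ω ∧ (ω.1 i, ω.2.2 i, ω.2.1 i.succ) = abc,
              jointP ch src ω := by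
          rw [← Finset.sum_fiberwise _ (fun ω => (ω.1 i, ω.2.2 i, ω.2.1 i.succ))]
          simp only [Finset.filter_filter]
      _ = ∑ a : X, ∑ b : Y, ∑ c : S, prefixWeight ch src (i + 1) (setStep i a b c ρ) := by
          simp only [Fintype.sum_prod_type]
          refine Finset.sum_congr rfl fun a _ => Finset.sum_congr rfl fun b _ =>
            Finset.sum_congr rfl fun c _ => (Finset.sum_congr (Finset.filter_congr fun ω _ =>
              (agreeBefore_succ_setStep_iff i a b c ρ ω).symm) fun _ _ => rfl).trans (ih _)
      _ = prefixWeight ch src k ρ := by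
          simp only [prefixWeight_succ, prefixWeight_congr ch src (agreeBefore_setStep i _ _ _ ρ),
            ← Finset.mul_sum, sum_stepWeight_setStep, mul_one]
          rfl

theorem card_agreeBefore_eq (m : ℕ) (ω ω' : Traj X S Y N) :
    #{ρ | AgreeBefore m ρ ω} = #{ρ | AgreeBefore m ρ ω'} :=
  Finset.card_nbij' (splicePrefix m ω' ·) (splicePrefix m ω ·)
    (fun ρ _ => by simpa using agreeBefore_splicePrefix m ω' ρ)
    (fun ρ _ => by simpa using agreeBefore_splicePrefix m ω ρ)
    (fun ρ hρ => splicePrefix_splicePrefix_of_agreeBefore (by simpa using hρ))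
    (fun ρ hρ => splicePrefix_splicePrefix_of_agreeBefore (by simpa using hρ))

theorem prE_prefixWeight_eq {m : ℕ} (hm : m ≤ N)
    {A : Set (Traj X S Y N)} (hA : DeterminedBefore m A) (ω₀ : Traj X S Y N) :
    prE (prefixWeight ch src m) A = #{ρ | AgreeBefore m ρ ω₀} * prE (jointP ch src) A := by
  calc prE (prefixWeight ch src m) A
      = ∑ ρ, ∑ ω, if AgreeBefore m ρ ω then A.indicator (jointP ch src) ω else 0 := by
        refine Finset.sum_congr rfl fun ρ _ => ?_
        rw [← Finset.sum_filter]
        by_cases hρ : ρ ∈ A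
        · rw [Set.indicator_of_mem hρ, ← sum_jointP_agreeBefore ch src hm]
          exact Finset.sum_congr rfl fun ω hω =>
            (Set.indicator_of_mem (hA ρ ω (Finset.mem_filter.mp hω).2 hρ) _).symm
        · rw [Set.indicator_of_notMem hρ]
          exact (Finset.sum_eq_zero fun ω hω => Set.indicator_of_notMem
            (fun h => hρ (hA ω ρ (Finset.mem_filter.mp hω).2.symm h)) _).symm
    _ = ∑ ω, #{ρ | AgreeBefore m ρ ω} * A.indicator (jointP ch src) ω := by
        rw [Finset.sum_comm]
        refine Finset.sum_congr rfl fun ω _ => ?_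
        rw [← Finset.sum_filter, Finset.sum_const, nsmul_eq_mul]
    _ = _ := by
        simp only [card_agreeBefore_eq m _ ω₀, ← Finset.mul_sum]
        rfl

theorem exists_prE_prefixWeight_eq_mul {m : ℕ} (hm : m ≤ N) :
    ∃ k : ℝ, 0 < k ∧ ∀ A : Set (Traj X S Y N), DeterminedBefore m A →
      prE (prefixWeight ch src m) A = k * prE (jointP ch src) A := by
  rcases isEmpty_or_nonempty (Traj X S Y N) with hΩ | hΩ
  · exact ⟨1, one_pos, fun A _ => by simp [prE]⟩
  · obtain ⟨ω₀⟩ := hΩ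
    refine ⟨#{ρ | AgreeBefore m ρ ω₀}, ?_, fun _ hA => prE_prefixWeight_eq ch src hm hA ω₀⟩
    exact_mod_cast Finset.card_pos.mpr ⟨ω₀, by simpa using agreeBefore_self m ω₀⟩

theorem prE_mul_prE_eq_of_prefixWeight {m : ℕ} (hm : m ≤ N) {A B A' B' : Set (Traj X S Y N)}
    (hA : DeterminedBefore m A) (hB : DeterminedBefore m B) (hA' : DeterminedBefore m A')
    (hB' : DeterminedBefore m B')
    (h : prE (prefixWeight ch src m) A * prE (prefixWeight ch src m) B =
      prE (prefixWeight ch src m) A' * prE (prefixWeight ch src m) B') :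
    prE (jointP ch src) A * prE (jointP ch src) B =
      prE (jointP ch src) A' * prE (jointP ch src) B' := by
  obtain ⟨k, hk, hq⟩ := exists_prE_prefixWeight_eq_mul ch src hm
  rw [hq A hA, hq B hB, hq A' hA', hq B' hB'] at h
  refine mul_left_cancel₀ (mul_pos hk hk).ne' ?_
  linear_combination h

end Marginalization

section HeadTail

variable (ch : NCFSC X S Y) (src : Source X S Y N u) (t : Fin N)

def headWeight (ρ : Traj X S Y N) : ℝ :=
  prefixWeight ch src (t - u) ρ *
    ∏ i : Fin N,
      if (t : ℕ) ≤ i + u ∧ (i : ℕ) < t then src.pol i ρ.1 ρ.2.1 ρ.2.2 (ρ.1 i) else 1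

def tailWeight (ρ : Traj X S Y N) : ℝ :=
  src.pol t ρ.1 ρ.2.1 ρ.2.2 (ρ.1 t) *
    ∏ i : Fin N, if (t : ℕ) ≤ i + u ∧ (i : ℕ) ≤ t then
      ch.W (ρ.2.2 i) (ρ.2.1 i.succ) (ρ.1 i) (ρ.2.1 i.castSucc) else 1

theorem prefixWeight_succ_eq_headWeight_mul_tailWeight (ρ : Traj X S Y N) :
    prefixWeight ch src (t + 1) ρ = headWeight ch src t ρ * tailWeight ch src t ρ := by
  have hfactor : ∀ i : Fin N, (if (i : ℕ) < t + 1 then stepWeight ch src i ρ else 1) =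
      (if (i : ℕ) < t - u then stepWeight ch src i ρ else 1) *
        (if (t : ℕ) ≤ i + u ∧ (i : ℕ) < t then src.pol i ρ.1 ρ.2.1 ρ.2.2 (ρ.1 i)
          else 1) *
        ((if (t : ℕ) ≤ i + u ∧ (i : ℕ) ≤ t then
            ch.W (ρ.2.2 i) (ρ.2.1 i.succ) (ρ.1 i) (ρ.2.1 i.castSucc) else 1) *
          if i = t then src.pol i ρ.1 ρ.2.1 ρ.2.2 (ρ.1 i) else 1) := by
    intro i
    by_cases hit : i = t
    · subst hit
      simp [stepWeight, show ¬ (i : ℕ) < i - u by omega, mul_comm]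
    · have hit' : (i : ℕ) ≠ t := Fin.val_ne_of_ne hit
      unfold stepWeight
      split_ifs <;> first | omega | ring
  unfold headWeight tailWeight prefixWeight
  simp only [hfactor, Finset.prod_mul_distrib, Finset.prod_ite_eq', Finset.mem_univ, if_true]
  ring

variable {ch src t}

theorem pol_replaceTail {i : Fin N} (hi : i ≤ t) (ρ τ : Traj X S Y N) :
    src.pol i (replaceTail t u ρ τ).1 (replaceTail t u ρ τ).2.1 (replaceTail t u ρ τ).2.2 =
      src.pol i ρ.1 ρ.2.1 ρ.2.2 :=
  src.causal i _ _ _ _ _ _ (fun j hj => if_neg (by simp only [Fin.le_def] at hi; omega))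
    (fun j hj => if_neg (by simp only [Fin.le_def] at hi; omega))
    (fun j hj => if_neg (by simp only [Fin.le_def] at hi; omega))

theorem headWeight_replaceTail (htu : u ≤ t) (ρ τ : Traj X S Y N) :
    headWeight ch src t (replaceTail t u ρ τ) = headWeight ch src t ρ := by
  unfold headWeight
  rw [prefixWeight_congr ch src (agreeBefore_replaceTail (by omega) ρ τ)]
  congr 1
  refine Finset.prod_congr rfl fun i _ => ?_
  split_ifs with hi
  · rw [pol_replaceTail (Fin.le_def.mpr hi.2.le)]
    exact congrArg _ (if_neg (by omega))
  · rfl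

theorem tailWeight_replaceTail {v : ℕ} (hM : IsMarkov v src) (huv : u ≤ v)
    {ρ τ : Traj X S Y N} (hwin : ρ ∈ windowEvent t u v τ.1 τ.2.1)
    (hpol : ∀ x s, src.pol t x s ρ.2.2 = src.pol t x s τ.2.2) :
    tailWeight ch src t (replaceTail t u ρ τ) = tailWeight ch src t τ := by
  set σ := replaceTail t u ρ τ
  have hx : ∀ j : Fin N, (t : ℕ) ≤ j + v → σ.1 j = τ.1 j := fun j hj => by
    simp only [σ, replaceTail]
    split_ifs with h
    exacts [rfl, hwin.1 j ⟨hj, by omega⟩]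
  have hs : ∀ j : Fin (N + 1), (t : ℕ) ≤ j + v → σ.2.1 j = τ.2.1 j := fun j hj => by
    simp only [σ, replaceTail]
    split_ifs with h
    exacts [rfl, hwin.2 j ⟨hj, by omega⟩]
  have hy : ∀ j : Fin N, (t : ℕ) ≤ j + u → σ.2.2 j = τ.2.2 j := fun j hj => if_pos hj
  unfold tailWeight
  rw [pol_replaceTail le_rfl,
    hM t ρ.1 τ.1 ρ.2.1 τ.2.1 ρ.2.2 ρ.2.2 hwin.1 hwin.2 (fun _ _ => rfl), hpol, hx t (by omega)]
  congr 1
  refine Finset.prod_congr rfl fun i _ => ?_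
  split_ifs with hi
  · rw [hy i hi.1, hs i.succ (by simp; omega), hx i (by omega), hs i.castSucc (by simp; omega)]
  · rfl

theorem prefixWeight_replaceTail_mul {v : ℕ} (hM : IsMarkov v src) (huv : u ≤ v) (htu : u ≤ t)
    {ρ τ : Traj X S Y N} (hwin : ρ ∈ windowEvent t u v τ.1 τ.2.1)
    (hpol : ∀ x s, src.pol t x s ρ.2.2 = src.pol t x s τ.2.2) :
    prefixWeight ch src (t + 1) (replaceTail t u ρ τ) *
        prefixWeight ch src (t + 1) (replaceTail t u τ ρ) =
      prefixWeight ch src (t + 1) ρ * prefixWeight ch src (t + 1) τ := by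
  simp only [prefixWeight_succ_eq_headWeight_mul_tailWeight, headWeight_replaceTail htu,
    tailWeight_replaceTail hM huv hwin hpol,
    tailWeight_replaceTail hM huv (mem_windowEvent_comm.mp hwin) fun x s => (hpol x s).symm]
  ring

end HeadTail

section SufficientStatistic

variable {v : ℕ} (ch : NCFSC X S Y) (src : Source X S Y N u) (t : Fin N)

theorem jointP_nonneg (ω : Traj X S Y N) : 0 ≤ jointP ch src ω :=
  prefixWeight_N_eq_jointP ch src ω ▸ prefixWeight_nonneg ch src N ω

theorem pol_eq_of_mem_histEvent {yh : Fin N → Y} {ρ : Traj X S Y N}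
    (hρ : ρ ∈ histEvent t u yh) (x : Fin N → X) (s : Fin (N + 1) → S) :
    src.pol t x s ρ.2.2 = src.pol t x s yh :=
  src.causal t _ _ _ _ _ _ (fun _ _ => rfl) (fun _ _ => rfl) hρ

theorem prE_targetEvent_inter_eq_sum (xf : Fin N → X) (sf : Fin (N + 1) → S)
    (yb yh : Fin N → Y) :
    prE (jointP ch src) (targetEvent t u v xf sf yb ∩ histEvent t u yh) =
      ∑ g : {j : Fin (N + 1) // (t : ℕ) ≤ (j : ℕ) + v ∧ (j : ℕ) + u ≤ (t : ℕ)} → S,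
        prE (jointP ch src) (targetEvent t u v xf sf yb ∩
          windowEvent t u v xf (Function.extend Subtype.val g sf) ∩ histEvent t u yh) := by
  rw [prE_eq_sum_prE_inter_preimage _ fun (ω : Traj X S Y N)
    (j : {j : Fin (N + 1) // (t : ℕ) ≤ (j : ℕ) + v ∧ (j : ℕ) + u ≤ (t : ℕ)}) => ω.2.1 j.1]
  refine Finset.sum_congr rfl fun g _ => ?_
  rw [Set.inter_right_comm, ← targetEvent_inter_stateWindow]
  rfl

theorem prE_targetEvent_mul_prE_windowEvent_eq (hM : IsMarkov v src) (huv : u ≤ v)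
    (htu : u ≤ (t : ℕ)) {yh yh' : Fin N → Y} (hpol : ∀ x s, src.pol t x s yh = src.pol t x s yh')
    (xf : Fin N → X) (sf sg : Fin (N + 1) → S) (yb : Fin N → Y) :
    prE (jointP ch src)
        (targetEvent t u v xf sf yb ∩ windowEvent t u v xf sg ∩ histEvent t u yh) *
        prE (jointP ch src) (windowEvent t u v xf sg ∩ histEvent t u yh') =
      prE (jointP ch src)
          (targetEvent t u v xf sf yb ∩ windowEvent t u v xf sg ∩ histEvent t u yh') *
        prE (jointP ch src) (windowEvent t u v xf sg ∩ histEvent t u yh) := by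
  have hdet : ∀ y : Fin N → Y, DeterminedBefore (t + 1)
      (targetEvent t u v xf sf yb ∩ windowEvent t u v xf sg ∩ histEvent t u y) := fun _ =>
    ((determinedBefore_targetEvent _ _ _).inter (determinedBefore_windowEvent _ _)).inter
      (determinedBefore_histEvent _)
  have hdet' : ∀ y : Fin N → Y,
      DeterminedBefore (t + 1) (windowEvent t u v xf sg ∩ histEvent t u y) := fun _ =>
    (determinedBefore_windowEvent _ _).inter (determinedBefore_histEvent _)
  refine prE_mul_prE_eq_of_prefixWeight ch src t.isLt (hdet yh) (hdet' yh') (hdet yh') (hdet' yh)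
    (prE_mul_prE_eq_of_involutive _ (fun z => (replaceTail t u z.2 z.1, replaceTail t u z.1 z.2))
      (fun z => Prod.ext (replaceTail_replaceTail z.1 z.2) (replaceTail_replaceTail z.2 z.1))
      (fun z hz => replaceTail_swap_mem huv hz.1 hz.2)
      (fun z hz => replaceTail_swap_mem huv hz.1 hz.2)
      fun ⟨ρ, τ⟩ ⟨⟨⟨_, hρW⟩, hρF⟩, hτW, hτF⟩ => ?_)
  refine (prefixWeight_replaceTail_mul hM huv htu (mem_windowEvent_of_mem hτW hρW)
    fun x s => ?_).trans (mul_comm _ _)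
  rw [pol_eq_of_mem_histEvent src t hτF, pol_eq_of_mem_histEvent src t hρF, hpol]

end SufficientStatistic

/-- **sufficient-statistic property of the a posteriori
vector.** For a non-controllable FSC with a source in `𝒫'_v(u,u)`
(`0 ≤ u ≤ v`), a time `u+1 ≤ t ≤ N` (0-based: `u ≤ (t:ℕ)`), and two
positive-probability output histories `y^{t-u-1}`, `ỹ^{t-u-1}` inducing
the same a posteriori vector `α_{t-1}`, the conditional joint law of
`(X_{t-v}^t, S_{t-v-1}, Y_{t-u}^t)` given the past outputs is the same
for the two histories, i.e. it depends on the past outputs only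
through `α_{t-1}`. -/
theorem statement10 {X S Y : Type} [Fintype X] [Fintype S] [Fintype Y] {N u : ℕ}
    (ch : NCFSC X S Y) (src : Source X S Y N u) (v : ℕ) (huv : u ≤ v)
    (hM : IsMarkov v src) (hA : AlphaPolicy v ch src)
    (t : Fin N) (htu : u ≤ (t : ℕ)) (yh yh' : Fin N → Y)
    (hpos : 0 < prE (jointP ch src)
      {ω : Traj X S Y N | ∀ j : Fin N, (j : ℕ) + u + 1 ≤ (t : ℕ) → ω.2.2 j = yh j})
    (hpos' : 0 < prE (jointP ch src)
      {ω : Traj X S Y N | ∀ j : Fin N, (j : ℕ) + u + 1 ≤ (t : ℕ) → ω.2.2 j = yh' j})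
    (halpha : alphaWinEq v ch src t yh yh') :
    ∀ (xf : Fin N → X) (sf : Fin (N + 1) → S) (yb : Fin N → Y),
      condPr (jointP ch src)
          {ω : Traj X S Y N |
            (∀ j : Fin N, (t : ℕ) ≤ (j : ℕ) + v ∧ (j : ℕ) ≤ (t : ℕ) → ω.1 j = xf j) ∧
              (∀ j : Fin (N + 1), (j : ℕ) + v = (t : ℕ) → ω.2.1 j = sf j) ∧
                ∀ j : Fin N, (t : ℕ) ≤ (j : ℕ) + u ∧ (j : ℕ) ≤ (t : ℕ) → ω.2.2 j = yb j}
          {ω : Traj X S Y N | ∀ j : Fin N, (j : ℕ) + u + 1 ≤ (t : ℕ) → ω.2.2 j = yh j} =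
        condPr (jointP ch src)
          {ω : Traj X S Y N |
            (∀ j : Fin N, (t : ℕ) ≤ (j : ℕ) + v ∧ (j : ℕ) ≤ (t : ℕ) → ω.1 j = xf j) ∧
              (∀ j : Fin (N + 1), (j : ℕ) + v = (t : ℕ) → ω.2.1 j = sf j) ∧
                ∀ j : Fin N, (t : ℕ) ≤ (j : ℕ) + u ∧ (j : ℕ) ≤ (t : ℕ) → ω.2.2 j = yb j}
          {ω : Traj X S Y N | ∀ j : Fin N, (j : ℕ) + u + 1 ≤ (t : ℕ) → ω.2.2 j = yh' j} := by
  intro xf sf yb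
  have hpol : ∀ x s, src.pol t x s yh = src.pol t x s yh' := fun x s =>
    funext (hA t yh yh' hpos hpos' halpha x s)
  have hp := jointP_nonneg ch src
  change prE _ (targetEvent t u v xf sf yb ∩ histEvent t u yh) / prE _ (histEvent t u yh) =
    prE _ (targetEvent t u v xf sf yb ∩ histEvent t u yh') / prE _ (histEvent t u yh')
  refine (div_eq_div_iff hpos.ne' hpos'.ne').mpr ?_
  rw [prE_targetEvent_inter_eq_sum, prE_targetEvent_inter_eq_sum, Finset.sum_mul, Finset.sum_mul]
  refine Finset.sum_congr rfl fun g _ => ?_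
  have hα := halpha xf (Function.extend Subtype.val g sf)
  rw [condPr, condPr, div_eq_div_iff hpos.ne' hpos'.ne'] at hα
  exact mul_eq_mul_of_cross_mul_eq hpos' (prE_nonneg hp _) (prE_nonneg hp _)
    (prE_mono hp (Set.inter_subset_inter_left _ Set.inter_subset_right))
    (prE_mono hp (Set.inter_subset_inter_left _ Set.inter_subset_right))
    (prE_targetEvent_mul_prE_windowEvent_eq ch src t hM huv htu hpol xf sf _ yb) hα

end FSCPaper
end
end

section
/- Key lemma for Theorem 3 (equation (samemeasure)): For a non-controllable FSC with a source in 𝒫_v(u,u) (0 ≤ u ≤ v), fix T with u+1 ≤ T ≤ N. Let y^{T-u-1} and ỹ^{T-u-1} be two output histories of positive probability that induce the same a posteriori vector, α_{T-1}(y^{T-u-1}) = α_{T-1}(ỹ^{T-u-1}), and suppose the same policies are used after time T, i.e., for every t with T ≤ t ≤ N, every continuation y_{T-u}^{t-u-1} and all arguments: π_t(x_t | x_{t-v}^{t-1}, s_{t-v-1}^{t-u-1}, (y^{T-u-1}, y_{T-u}^{t-u-1})) = π_t(x_t | x_{t-v}^{t-1}, s_{t-v-1}^{t-u-1}, (ỹ^{T-u-1},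 y_{T-u}^{t-u-1})). Then for all (x_{T-v}^N, s_{T-v-1}^{N-v-1}, y_{T-u}^N): Pr(X_{T-v}^N = x_{T-v}^N, S_{T-v-1}^{N-v-1} = s_{T-v-1}^{N-v-1}, Y_{T-u}^N = y_{T-u}^N | Y^{T-u-1} = y^{T-u-1}) = Pr(X_{T-v}^N = x_{T-v}^N, S_{T-v-1}^{N-v-1} = s_{T-v-1}^{N-v-1}, Y_{T-u}^N = y_{T-u}^N | Y^{T-u-1} = ỹ^{T-u-1}). -/
/-!
Common framework: finite-state channels (FSCs), non-controllable FSCs,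
sources with delayed feedback (FB) and delayed state information (SI),
induced joint pmfs, conditional probabilities and conditional mutual
information, following Huang–Kavčić–Ma, "Upper Bounds on the Capacities of
Non-Controllable Finite-State Channels with/without Feedback".

Time convention: for a horizon `N`, the channel inputs are `X_1,…,X_N`
(coordinate `x i` of `x : Fin N → X` is `X_{i+1}`), the states are
`S_0,…,S_N` (coordinate `s j` of `s : Fin (N+1) → S` is `S_j`), and the
outputs are `Y_1,…,Y_N` (coordinate `y i` is `Y_{i+1}`).
-/

open Finset

noncomputable section

namespace FSCPaper

variable {X S Y : Type} [Fintype X] [Fintype S] [Fintype Y]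

/-! ### Auxiliary machinery for Statement 13 -/

section SplitAux
variable {ι α : Type} [Fintype ι] [DecidableEq ι] [Fintype α]

/-- Glue a function from values on three cells of a partition of `ι`. -/
def glue3 (P Q : ι → Prop) [DecidablePred P] [DecidablePred Q]
    (a : {j // ¬ P j} → α) (m : {j // P j ∧ Q j} → α) (b : {j // P j ∧ ¬ Q j} → α) :
    ι → α := fun j =>
  if hp : P j then (if hq : Q j then m ⟨j, hp, hq⟩ else b ⟨j, hp, hq⟩) else a ⟨j, hp⟩

/-- The three-cell decomposition of a function space. -/
def equiv3 (P Q : ι → Prop) [DecidablePred P] [DecidablePred Q] :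
    (ι → α) ≃ ({j // ¬ P j} → α) × ({j // P j ∧ Q j} → α) × ({j // P j ∧ ¬ Q j} → α) where
  toFun f := (fun j => f j.1, fun j => f j.1, fun j => f j.1)
  invFun t := glue3 P Q t.1 t.2.1 t.2.2
  left_inv f := by
    funext j; unfold glue3; by_cases hp : P j
    · by_cases hq : Q j <;> simp [hp, hq]
    · simp [hp]
  right_inv t := by
    obtain ⟨a, m, b⟩ := t
    refine Prod.ext ?_ (Prod.ext ?_ ?_)
    · funext j; obtain ⟨j, hj⟩ := j; simp [glue3, hj]
    · funext j; obtain ⟨j, hj⟩ := j; simp [glue3, hj.1, hj.2]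
    · funext j; obtain ⟨j, hj⟩ := j; simp [glue3, hj.1, hj.2]

lemma sum_glue3 (P Q : ι → Prop) [DecidablePred P] [DecidablePred Q] (F : (ι → α) → ℝ) :
    ∑ f : ι → α, F f
      = ∑ a : {j // ¬ P j} → α, ∑ m : {j // P j ∧ Q j} → α, ∑ b : {j // P j ∧ ¬ Q j} → α,
          F (glue3 P Q a m b) := by
  rw [← Equiv.sum_comp (equiv3 P Q (α := α)).symm F, Fintype.sum_prod_type]
  simp only [Fintype.sum_prod_type]
  rfl

/-- Glue a function from values on the two cells of a partition of `ι`. -/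
def glue2 (P : ι → Prop) [DecidablePred P]
    (m : {j // P j} → α) (b : {j // ¬ P j} → α) : ι → α := fun j =>
  if hp : P j then m ⟨j, hp⟩ else b ⟨j, hp⟩

/-- The two-cell decomposition of a function space. -/
def equiv2 (P : ι → Prop) [DecidablePred P] :
    (ι → α) ≃ ({j // P j} → α) × ({j // ¬ P j} → α) where
  toFun f := (fun j => f j.1, fun j => f j.1)
  invFun t := glue2 P t.1 t.2
  left_inv f := by
    funext j; unfold glue2; by_cases hp : P j <;> simp [hp]
  right_inv t := by
    obtain ⟨m, b⟩ := t
    refine Prod.ext ?_ ?_ <;> funext j <;> obtain ⟨j, hj⟩ := j <;> simp [glue2, hj]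

lemma sum_glue2 (P : ι → Prop) [DecidablePred P] (F : (ι → α) → ℝ) :
    ∑ f : ι → α, F f
      = ∑ m : {j // P j} → α, ∑ b : {j // ¬ P j} → α, F (glue2 P m b) := by
  rw [← Equiv.sum_comp (equiv2 P (α := α)).symm F, Fintype.sum_prod_type]
  rfl

end SplitAux

section MainAux

variable {X S Y : Type} [Fintype X] [Fintype S] [Fintype Y] {N u : ℕ}

/-- The policy factor at time `i`. -/
def polT (src : Source X S Y N u) (i : Fin N) (ω : Traj X S Y N) : ℝ :=
  src.pol i ω.1 ω.2.1 ω.2.2 (ω.1 i)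

/-- The channel factor at time `i`. -/
def Wch (ch : NCFSC X S Y) (i : Fin N) (ω : Traj X S Y N) : ℝ :=
  ch.W (ω.2.2 i) (ω.2.1 i.succ) (ω.1 i) (ω.2.1 i.castSucc)

/-- Past part of the joint pmf (policies strictly before time `T`, channel
factors strictly before time `T - u`, and the initial pmf). -/
def Afun (ch : NCFSC X S Y) (src : Source X S Y N u) (T : ℕ) (ω : Traj X S Y N) : ℝ :=
  ch.init (ω.2.1 0) *
    ((∏ i ∈ univ.filter (fun i : Fin N => ¬ T ≤ (i : ℕ) + 1), polT src i ω) *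
      ∏ i ∈ univ.filter (fun i : Fin N => ¬ T ≤ (i : ℕ) + u + 1), Wch ch i ω)

/-- Future part of the joint pmf. -/
def Bfun (ch : NCFSC X S Y) (src : Source X S Y N u) (T : ℕ) (ω : Traj X S Y N) : ℝ :=
  (∏ i ∈ univ.filter (fun i : Fin N => T ≤ (i : ℕ) + 1), polT src i ω) *
    ∏ i ∈ univ.filter (fun i : Fin N => T ≤ (i : ℕ) + u + 1), Wch ch i ω

variable (ch : NCFSC X S Y) (src : Source X S Y N u)

lemma jointP_eq_AB (T : ℕ) (ω : Traj X S Y N) :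
    jointP ch src ω = Afun ch src T ω * Bfun ch src T ω := by
  have h0 : jointP ch src ω
      = ch.init (ω.2.1 0) * ((∏ i : Fin N, polT src i ω) * ∏ i : Fin N, Wch ch i ω) := by
    rw [jointP, ← Finset.prod_mul_distrib]; rfl
  rw [h0,
    ← Finset.prod_filter_mul_prod_filter_not univ (fun i : Fin N => T ≤ (i : ℕ) + 1)
      (fun i => polT src i ω),
    ← Finset.prod_filter_mul_prod_filter_not univ (fun i : Fin N => T ≤ (i : ℕ) + u + 1)
      (fun i => Wch ch i ω), Afun, Bfun]
  ring

lemma Bfun_nonneg (T : ℕ) (ω : Traj X S Y N) : 0 ≤ Bfun ch src T ω := by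
  refine mul_nonneg (Finset.prod_nonneg fun i _ => src.nonneg _ _ _ _ _)
    (Finset.prod_nonneg fun i _ => ?_)
  exact mul_nonneg (ch.P_nonneg _ _ _) (ch.Q_nonneg _ _)

lemma Afun_congr {T : ℕ} (hT1 : u + 1 ≤ T) (ω ω' : Traj X S Y N)
    (hx : ∀ j : Fin N, (j : ℕ) + 1 < T → ω.1 j = ω'.1 j)
    (hs : ∀ j : Fin (N + 1), (j : ℕ) + u + 1 ≤ T → ω.2.1 j = ω'.2.1 j)
    (hy : ∀ j : Fin N, (j : ℕ) + u + 1 < T → ω.2.2 j = ω'.2.2 j) :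
    Afun ch src T ω = Afun ch src T ω' := by
  unfold Afun
  have h0 : ω.2.1 0 = ω'.2.1 0 := hs 0 (by simp; omega)
  rw [h0]
  congr 1
  congr 1
  · refine Finset.prod_congr rfl fun i hi => ?_
    simp only [Finset.mem_filter, Finset.mem_univ, true_and, not_le] at hi
    unfold polT
    rw [src.causal i ω.1 ω'.1 ω.2.1 ω'.2.1 ω.2.2 ω'.2.2
        (fun j hj => hx j (by omega))
        (fun j hj => hs j (by omega))
        (fun j hj => hy j (by omega)),
      hx i (by omega)]
  · refine Finset.prod_congr rfl fun i hi => ?_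
    simp only [Finset.mem_filter, Finset.mem_univ, true_and, not_le] at hi
    unfold Wch
    rw [hy i (by omega), hx i (by omega),
      hs i.succ (by simp [Fin.val_succ]; omega),
      hs i.castSucc (by simp [Fin.coe_castSucc]; omega)]

lemma Bfun_congr_coords {v T : ℕ} (huv : u ≤ v) (hM : IsMarkov v src) (ω ω' : Traj X S Y N)
    (hx : ∀ j : Fin N, T ≤ (j : ℕ) + v + 1 → ω.1 j = ω'.1 j)
    (hs : ∀ j : Fin (N + 1), T ≤ (j : ℕ) + v + 1 → ω.2.1 j = ω'.2.1 j)
    (hy : ω.2.2 = ω'.2.2) :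
    Bfun ch src T ω = Bfun ch src T ω' := by
  unfold Bfun
  congr 1
  · refine Finset.prod_congr rfl fun i hi => ?_
    simp only [Finset.mem_filter, Finset.mem_univ, true_and] at hi
    unfold polT
    rw [hM i ω.1 ω'.1 ω.2.1 ω'.2.1 ω.2.2 ω'.2.2
        (fun j hj => hx j (by omega))
        (fun j hj => hs j (by omega))
        (fun j _ => congrFun hy j),
      hx i (by omega)]
  · refine Finset.prod_congr rfl fun i hi => ?_
    simp only [Finset.mem_filter, Finset.mem_univ, true_and] at hi
    unfold Wch
    rw [congrFun hy i, hx i (by omega),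
      hs i.succ (by simp [Fin.val_succ]; omega),
      hs i.castSucc (by simp [Fin.coe_castSucc]; omega)]

lemma Bfun_congr_hist {T : ℕ} (yh yh' : Fin N → Y)
    (hpol : ∀ t : Fin N, T ≤ (t : ℕ) + 1 →
      ∀ (xf : Fin N → X) (sf : Fin (N + 1) → S) (yc yc' : Fin N → Y),
        (∀ j : Fin N, (j : ℕ) + u + 1 < T → yc j = yh j) →
        (∀ j : Fin N, (j : ℕ) + u + 1 < T → yc' j = yh' j) →
        (∀ j : Fin N, T ≤ (j : ℕ) + u + 1 → yc j = yc' j) →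
        ∀ a : X, src.pol t xf sf yc a = src.pol t xf sf yc' a)
    (ω ω' : Traj X S Y N)
    (hx : ω.1 = ω'.1) (hs : ω.2.1 = ω'.2.1)
    (hyB : ∀ j : Fin N, T ≤ (j : ℕ) + u + 1 → ω.2.2 j = ω'.2.2 j)
    (hyH : ∀ j : Fin N, (j : ℕ) + u + 1 < T → ω.2.2 j = yh j)
    (hyH' : ∀ j : Fin N, (j : ℕ) + u + 1 < T → ω'.2.2 j = yh' j) :
    Bfun ch src T ω = Bfun ch src T ω' := by
  unfold Bfun
  congr 1
  · refine Finset.prod_congr rfl fun i hi => ?_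
    simp only [Finset.mem_filter, Finset.mem_univ, true_and] at hi
    unfold polT
    rw [hpol i hi ω.1 ω.2.1 ω.2.2 ω'.2.2 hyH hyH' hyB (ω.1 i), hx, hs]
  · refine Finset.prod_congr rfl fun i hi => ?_
    simp only [Finset.mem_filter, Finset.mem_univ, true_and] at hi
    unfold Wch
    rw [hyB i hi, hx, hs]

end MainAux
section FactorAux

lemma sum_boole_mul' {A : Type} [Fintype A] [DecidableEq A] (c : A) (f : A → ℝ) :
    ∑ a : A, (if a = c then (1:ℝ) else 0) * f a = f c := by
  simp [ite_mul, one_mul, zero_mul]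

lemma factor7 {A1 A2 A3 B1 B2 B3 C1 : Type} [Fintype A1] [Fintype A2] [Fintype A3]
    [Fintype B1] [Fintype B2] [Fintype B3] [Fintype C1]
    (f : A1 → A2 → B1 → B2 → ℝ) (g : A2 → A3 → B2 → B3 → C1 → ℝ) :
    (∑ xa : A1, ∑ xm : A2, ∑ xb : A3, ∑ sa : B1, ∑ sm : B2, ∑ sb : B3, ∑ yb : C1,
        f xa xm sa sm * g xm xb sm sb yb)
      = ∑ xm : A2, ∑ sm : B2, (∑ xa : A1, ∑ sa : B1, f xa xm sa sm)
          * (∑ xb : A3, ∑ sb : B3, ∑ yb : C1, g xm xb sm sb yb) := by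
  classical
  let e : A1 × A2 × A3 × B1 × B2 × B3 × C1 ≃ A2 × B2 × (A1 × B1) × (A3 × B3 × C1) :=
    { toFun := fun r => (r.2.1, r.2.2.2.2.1, (r.1, r.2.2.2.1),
        (r.2.2.1, r.2.2.2.2.2.1, r.2.2.2.2.2.2)),
      invFun := fun t => (t.2.2.1.1, t.1, t.2.2.2.1, t.2.2.1.2, t.2.1, t.2.2.2.2.1, t.2.2.2.2.2),
      left_inv := fun _ => rfl,
      right_inv := fun _ => rfl }
  let F : A2 × B2 × (A1 × B1) × (A3 × B3 × C1) → ℝ := fun t =>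
    f t.2.2.1.1 t.1 t.2.2.1.2 t.2.1 * g t.1 t.2.2.2.1 t.2.1 t.2.2.2.2.1 t.2.2.2.2.2
  have h1 : (∑ r : A1 × A2 × A3 × B1 × B2 × B3 × C1, F (e r)) = ∑ t, F t :=
    Equiv.sum_comp e F
  have h2 : (∑ xa : A1, ∑ xm : A2, ∑ xb : A3, ∑ sa : B1, ∑ sm : B2, ∑ sb : B3, ∑ yb : C1,
      f xa xm sa sm * g xm xb sm sb yb) = ∑ r : A1 × A2 × A3 × B1 × B2 × B3 × C1, F (e r) := by
    simp only [Fintype.sum_prod_type]; rfl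
  have h3 : (∑ t : A2 × B2 × (A1 × B1) × (A3 × B3 × C1), F t)
      = ∑ xm : A2, ∑ sm : B2, (∑ xa : A1, ∑ sa : B1, f xa xm sa sm)
          * (∑ xb : A3, ∑ sb : B3, ∑ yb : C1, g xm xb sm sb yb) := by
    simp only [Fintype.sum_prod_type, F]
    refine Finset.sum_congr rfl fun xm _ => Finset.sum_congr rfl fun sm _ => ?_
    rw [Finset.sum_mul_sum]
    refine Finset.sum_congr rfl fun xa _ => ?_
    rw [Finset.sum_comm]
    refine Finset.sum_congr rfl fun xb _ => ?_
    simp only [← Finset.mul_sum]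
    rw [← Finset.sum_mul]
  rw [h2, h1, h3]

end FactorAux
section GlueEval
variable {ι α : Type}

lemma glue3_neg (P Q : ι → Prop) [DecidablePred P] [DecidablePred Q]
    (a : {j // ¬ P j} → α) (m : {j // P j ∧ Q j} → α) (b : {j // P j ∧ ¬ Q j} → α)
    (j : ι) (hp : ¬ P j) : glue3 P Q a m b j = a ⟨j, hp⟩ := dif_neg hp

lemma glue3_pos_pos (P Q : ι → Prop) [DecidablePred P] [DecidablePred Q]
    (a : {j // ¬ P j} → α) (m : {j // P j ∧ Q j} → α) (b : {j // P j ∧ ¬ Q j} → α)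
    (j : ι) (hp : P j) (hq : Q j) : glue3 P Q a m b j = m ⟨j, hp, hq⟩ := by
  unfold glue3; rw [dif_pos hp, dif_pos hq]

lemma glue3_pos_neg (P Q : ι → Prop) [DecidablePred P] [DecidablePred Q]
    (a : {j // ¬ P j} → α) (m : {j // P j ∧ Q j} → α) (b : {j // P j ∧ ¬ Q j} → α)
    (j : ι) (hp : P j) (hq : ¬ Q j) : glue3 P Q a m b j = b ⟨j, hp, hq⟩ := by
  unfold glue3; rw [dif_pos hp, dif_neg hq]

lemma glue3_eq_of_b (P Q : ι → Prop) [DecidablePred P] [DecidablePred Q]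
    (a : {j // ¬ P j} → α) (m : {j // P j ∧ Q j} → α) (b b' : {j // P j ∧ ¬ Q j} → α)
    (j : ι) (hq : Q j) : glue3 P Q a m b j = glue3 P Q a m b' j := by
  unfold glue3; by_cases hp : P j
  · rw [dif_pos hp, dif_pos hp, dif_pos hq, dif_pos hq]
  · rw [dif_neg hp, dif_neg hp]

lemma glue3_eq_of_a (P Q : ι → Prop) [DecidablePred P] [DecidablePred Q]
    (a a' : {j // ¬ P j} → α) (m : {j // P j ∧ Q j} → α) (b : {j // P j ∧ ¬ Q j} → α)
    (j : ι) (hp : P j) : glue3 P Q a m b j = glue3 P Q a' m b j := by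
  unfold glue3; rw [dif_pos hp, dif_pos hp]

lemma glue2_pos (P : ι → Prop) [DecidablePred P]
    (m : {j // P j} → α) (b : {j // ¬ P j} → α) (j : ι) (hp : P j) :
    glue2 P m b j = m ⟨j, hp⟩ := dif_pos hp

lemma glue2_neg (P : ι → Prop) [DecidablePred P]
    (m : {j // P j} → α) (b : {j // ¬ P j} → α) (j : ι) (hp : ¬ P j) :
    glue2 P m b j = b ⟨j, hp⟩ := dif_neg hp

lemma glue2_eq_of_b (P : ι → Prop) [DecidablePred P]
    (m : {j // P j} → α) (b b' : {j // ¬ P j} → α) (j : ι) (hp : P j) :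
    glue2 P m b j = glue2 P m b' j := by
  unfold glue2; rw [dif_pos hp, dif_pos hp]

end GlueEval

section TrajGlue

variable {X S Y : Type} [Fintype X] [Fintype S] [Fintype Y] {N : ℕ}

/-- Reconstruct a trajectory from its eight coordinate blocks. -/
def trajGlue (u : ℕ) (v T : ℕ)
    (xa : {j : Fin N // ¬ T ≤ (j : ℕ) + v + 1} → X)
    (xm : {j : Fin N // T ≤ (j : ℕ) + v + 1 ∧ (j : ℕ) + 1 < T} → X)
    (xb : {j : Fin N // T ≤ (j : ℕ) + v + 1 ∧ ¬ (j : ℕ) + 1 < T} → X)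
    (sa : {j : Fin (N + 1) // ¬ T ≤ (j : ℕ) + v + 1} → S)
    (sm : {j : Fin (N + 1) // T ≤ (j : ℕ) + v + 1 ∧ (j : ℕ) + u + 1 ≤ T} → S)
    (sb : {j : Fin (N + 1) // T ≤ (j : ℕ) + v + 1 ∧ ¬ (j : ℕ) + u + 1 ≤ T} → S)
    (ym : {j : Fin N // (j : ℕ) + u + 1 < T} → Y)
    (yb : {j : Fin N // ¬ (j : ℕ) + u + 1 < T} → Y) : Traj X S Y N :=
  (glue3 (fun j : Fin N => T ≤ (j : ℕ) + v + 1) (fun j : Fin N => (j : ℕ) + 1 < T) xa xm xb,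
    glue3 (fun j : Fin (N + 1) => T ≤ (j : ℕ) + v + 1)
      (fun j : Fin (N + 1) => (j : ℕ) + u + 1 ≤ T) sa sm sb,
    glue2 (fun j : Fin N => (j : ℕ) + u + 1 < T) ym yb)

lemma sum_traj_expand (u v T : ℕ) (F : Traj X S Y N → ℝ) :
    ∑ ω : Traj X S Y N, F ω
      = ∑ xa : {j : Fin N // ¬ T ≤ (j : ℕ) + v + 1} → X,
        ∑ xm : {j : Fin N // T ≤ (j : ℕ) + v + 1 ∧ (j : ℕ) + 1 < T} → X,
        ∑ xb : {j : Fin N // T ≤ (j : ℕ) + v + 1 ∧ ¬ (j : ℕ) + 1 < T} → X,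
        ∑ sa : {j : Fin (N + 1) // ¬ T ≤ (j : ℕ) + v + 1} → S,
        ∑ sm : {j : Fin (N + 1) // T ≤ (j : ℕ) + v + 1 ∧ (j : ℕ) + u + 1 ≤ T} → S,
        ∑ sb : {j : Fin (N + 1) // T ≤ (j : ℕ) + v + 1 ∧ ¬ (j : ℕ) + u + 1 ≤ T} → S,
        ∑ ym : {j : Fin N // (j : ℕ) + u + 1 < T} → Y,
        ∑ yb : {j : Fin N // ¬ (j : ℕ) + u + 1 < T} → Y,
          F (trajGlue u v T xa xm xb sa sm sb ym yb) := by
  rw [Fintype.sum_prod_type,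
    sum_glue3 (fun j : Fin N => T ≤ (j : ℕ) + v + 1) (fun j : Fin N => (j : ℕ) + 1 < T)
      (fun x => ∑ p : (Fin (N + 1) → S) × (Fin N → Y), F (x, p))]
  refine Finset.sum_congr rfl fun xa _ => Finset.sum_congr rfl fun xm _ =>
    Finset.sum_congr rfl fun xb _ => ?_
  rw [Fintype.sum_prod_type,
    sum_glue3 (fun j : Fin (N + 1) => T ≤ (j : ℕ) + v + 1)
      (fun j : Fin (N + 1) => (j : ℕ) + u + 1 ≤ T)
      (fun s => ∑ y : Fin N → Y,
        F (glue3 (fun j : Fin N => T ≤ (j : ℕ) + v + 1)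
            (fun j : Fin N => (j : ℕ) + 1 < T) xa xm xb, s, y))]
  refine Finset.sum_congr rfl fun sa _ => Finset.sum_congr rfl fun sm _ =>
    Finset.sum_congr rfl fun sb _ => ?_
  rw [sum_glue2 (fun j : Fin N => (j : ℕ) + u + 1 < T)
      (fun y => F (glue3 (fun j : Fin N => T ≤ (j : ℕ) + v + 1)
          (fun j : Fin N => (j : ℕ) + 1 < T) xa xm xb,
        glue3 (fun j : Fin (N + 1) => T ≤ (j : ℕ) + v + 1)
          (fun j : Fin (N + 1) => (j : ℕ) + u + 1 ≤ T) sa sm sb, y))]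
  rfl

end TrajGlue
section CondIff
variable {X S Y : Type} {N : ℕ}

lemma condY_iff (u T : ℕ) (ym : {j : Fin N // (j : ℕ) + u + 1 < T} → Y)
    (yb : {j : Fin N // ¬ (j : ℕ) + u + 1 < T} → Y) (h : Fin N → Y) :
    (∀ j : Fin N, (j : ℕ) + u + 1 < T →
        glue2 (fun j : Fin N => (j : ℕ) + u + 1 < T) ym yb j = h j)
      ↔ ym = fun j => h j.1 := by
  constructor
  · intro H; funext j
    have := H j.1 j.2
    rwa [glue2_pos _ ym yb j.1 j.2] at this
  · rintro rfl j hj; rw [glue2_pos _ (fun j => h j.1) yb j hj]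

lemma condYB_iff (u T : ℕ) (ym : {j : Fin N // (j : ℕ) + u + 1 < T} → Y)
    (yb : {j : Fin N // ¬ (j : ℕ) + u + 1 < T} → Y) (yf : Fin N → Y) :
    (∀ j : Fin N, T ≤ (j : ℕ) + u + 1 →
        glue2 (fun j : Fin N => (j : ℕ) + u + 1 < T) ym yb j = yf j)
      ↔ yb = fun j => yf j.1 := by
  constructor
  · intro H; funext j
    have := H j.1 (Nat.not_lt.mp j.2)
    rwa [glue2_neg _ ym yb j.1 j.2] at this
  · rintro rfl j hj; rw [glue2_neg _ ym (fun j => yf j.1) j (by omega)]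

lemma condXM_iff (v T : ℕ) (xa : {j : Fin N // ¬ T ≤ (j : ℕ) + v + 1} → X)
    (xm : {j : Fin N // T ≤ (j : ℕ) + v + 1 ∧ (j : ℕ) + 1 < T} → X)
    (xb : {j : Fin N // T ≤ (j : ℕ) + v + 1 ∧ ¬ (j : ℕ) + 1 < T} → X) (xfull : Fin N → X) :
    (∀ j : Fin N, T ≤ (j : ℕ) + v + 1 ∧ (j : ℕ) + 1 < T →
        glue3 (fun j : Fin N => T ≤ (j : ℕ) + v + 1) (fun j : Fin N => (j : ℕ) + 1 < T)
          xa xm xb j = xfull j)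
      ↔ xm = fun j => xfull j.1 := by
  constructor
  · intro H; funext j
    have := H j.1 j.2
    rwa [glue3_pos_pos _ _ xa xm xb j.1 j.2.1 j.2.2] at this
  · rintro rfl j ⟨h1, h2⟩; rw [glue3_pos_pos _ _ xa (fun j => xfull j.1) xb j h1 h2]

lemma condSM_iff (u v T : ℕ) (sa : {j : Fin (N + 1) // ¬ T ≤ (j : ℕ) + v + 1} → S)
    (sm : {j : Fin (N + 1) // T ≤ (j : ℕ) + v + 1 ∧ (j : ℕ) + u + 1 ≤ T} → S)
    (sb : {j : Fin (N + 1) // T ≤ (j : ℕ) + v + 1 ∧ ¬ (j : ℕ) + u + 1 ≤ T} → S)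
    (sfull : Fin (N + 1) → S) :
    (∀ j : Fin (N + 1), T ≤ (j : ℕ) + v + 1 ∧ (j : ℕ) + u + 1 ≤ T →
        glue3 (fun j : Fin (N + 1) => T ≤ (j : ℕ) + v + 1)
          (fun j : Fin (N + 1) => (j : ℕ) + u + 1 ≤ T) sa sm sb j = sfull j)
      ↔ sm = fun j => sfull j.1 := by
  constructor
  · intro H; funext j
    have := H j.1 j.2
    rwa [glue3_pos_pos _ _ sa sm sb j.1 j.2.1 j.2.2] at this
  · rintro rfl j ⟨h1, h2⟩; rw [glue3_pos_pos _ _ sa (fun j => sfull j.1) sb j h1 h2]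

lemma condXE_iff (v T : ℕ) (xa : {j : Fin N // ¬ T ≤ (j : ℕ) + v + 1} → X)
    (xm : {j : Fin N // T ≤ (j : ℕ) + v + 1 ∧ (j : ℕ) + 1 < T} → X)
    (xb : {j : Fin N // T ≤ (j : ℕ) + v + 1 ∧ ¬ (j : ℕ) + 1 < T} → X) (xf : Fin N → X) :
    (∀ j : Fin N, T ≤ (j : ℕ) + v + 1 →
        glue3 (fun j : Fin N => T ≤ (j : ℕ) + v + 1) (fun j : Fin N => (j : ℕ) + 1 < T)
          xa xm xb j = xf j)
      ↔ ((xm = fun j => xf j.1) ∧ xb = fun j => xf j.1) := by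
  constructor
  · intro H
    constructor
    · funext j
      have := H j.1 j.2.1
      rwa [glue3_pos_pos _ _ xa xm xb j.1 j.2.1 j.2.2] at this
    · funext j
      have := H j.1 j.2.1
      rwa [glue3_pos_neg _ _ xa xm xb j.1 j.2.1 j.2.2] at this
  · rintro ⟨rfl, rfl⟩ j hp
    by_cases hq : (j : ℕ) + 1 < T
    · rw [glue3_pos_pos _ _ xa (fun j => xf j.1) (fun j => xf j.1) j hp hq]
    · rw [glue3_pos_neg _ _ xa (fun j => xf j.1) (fun j => xf j.1) j hp hq]

lemma condSE_iff (u v T : ℕ) (sa : {j : Fin (N + 1) // ¬ T ≤ (j : ℕ) + v + 1} → S)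
    (sm : {j : Fin (N + 1) // T ≤ (j : ℕ) + v + 1 ∧ (j : ℕ) + u + 1 ≤ T} → S)
    (sb : {j : Fin (N + 1) // T ≤ (j : ℕ) + v + 1 ∧ ¬ (j : ℕ) + u + 1 ≤ T} → S)
    (sf : Fin (N + 1) → S) :
    (∀ j : Fin (N + 1), T ≤ (j : ℕ) + v + 1 ∧ (j : ℕ) + v + 1 ≤ N →
        glue3 (fun j : Fin (N + 1) => T ≤ (j : ℕ) + v + 1)
          (fun j : Fin (N + 1) => (j : ℕ) + u + 1 ≤ T) sa sm sb j = sf j)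
      ↔ ((∀ j : {j : Fin (N + 1) // T ≤ (j : ℕ) + v + 1 ∧ (j : ℕ) + u + 1 ≤ T},
            ((j : Fin (N + 1)) : ℕ) + v + 1 ≤ N → sm j = sf j)
          ∧ ∀ j : {j : Fin (N + 1) // T ≤ (j : ℕ) + v + 1 ∧ ¬ (j : ℕ) + u + 1 ≤ T},
            ((j : Fin (N + 1)) : ℕ) + v + 1 ≤ N → sb j = sf j) := by
  constructor
  · intro H
    constructor
    · intro j hN
      have := H j.1 ⟨j.2.1, hN⟩
      rwa [glue3_pos_pos _ _ sa sm sb j.1 j.2.1 j.2.2] at this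
    · intro j hN
      have := H j.1 ⟨j.2.1, hN⟩
      rwa [glue3_pos_neg _ _ sa sm sb j.1 j.2.1 j.2.2] at this
  · rintro ⟨H1, H2⟩ j ⟨hp, hN⟩
    by_cases hq : (j : ℕ) + u + 1 ≤ T
    · rw [glue3_pos_pos _ _ sa sm sb j hp hq]; exact H1 ⟨j, hp, hq⟩ hN
    · rw [glue3_pos_neg _ _ sa sm sb j hp hq]; exact H2 ⟨j, hp, hq⟩ hN

end CondIff

section Marginals
open Classical
variable {X S Y : Type} [Fintype X] [Fintype S] [Fintype Y] {N u : ℕ}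

/-- Past marginal `Ā_h(w)`. -/
def Abar (ch : NCFSC X S Y) (src : Source X S Y N u) (v T : ℕ) (h : Fin N → Y)
    (x₀ : X) (s₀ : S) (y₀ : Y)
    (xm : {j : Fin N // T ≤ (j : ℕ) + v + 1 ∧ (j : ℕ) + 1 < T} → X)
    (sm : {j : Fin (N + 1) // T ≤ (j : ℕ) + v + 1 ∧ (j : ℕ) + u + 1 ≤ T} → S) : ℝ :=
  ∑ xa : {j : Fin N // ¬ T ≤ (j : ℕ) + v + 1} → X,
  ∑ sa : {j : Fin (N + 1) // ¬ T ≤ (j : ℕ) + v + 1} → S,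
    Afun ch src T (trajGlue u v T xa xm (fun _ => x₀) sa sm (fun _ => s₀)
      (fun j => h j.1) (fun _ => y₀))

/-- Future normalisation `C(w)`. -/
def Cbar (ch : NCFSC X S Y) (src : Source X S Y N u) (v T : ℕ) (h : Fin N → Y)
    (x₀ : X) (s₀ : S)
    (xm : {j : Fin N // T ≤ (j : ℕ) + v + 1 ∧ (j : ℕ) + 1 < T} → X)
    (sm : {j : Fin (N + 1) // T ≤ (j : ℕ) + v + 1 ∧ (j : ℕ) + u + 1 ≤ T} → S) : ℝ :=
  ∑ xb : {j : Fin N // T ≤ (j : ℕ) + v + 1 ∧ ¬ (j : ℕ) + 1 < T} → X,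
  ∑ sb : {j : Fin (N + 1) // T ≤ (j : ℕ) + v + 1 ∧ ¬ (j : ℕ) + u + 1 ≤ T} → S,
  ∑ yb : {j : Fin N // ¬ (j : ℕ) + u + 1 < T} → Y,
    Bfun ch src T (trajGlue u v T (fun _ => x₀) xm xb (fun _ => s₀) sm sb
      (fun j => h j.1) yb)

/-- Future event weight `D(w)`. -/
def Dbar (ch : NCFSC X S Y) (src : Source X S Y N u) (v T : ℕ) (h : Fin N → Y)
    (x₀ : X) (s₀ : S) (xf : Fin N → X) (sf : Fin (N + 1) → S) (yf : Fin N → Y)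
    (xm : {j : Fin N // T ≤ (j : ℕ) + v + 1 ∧ (j : ℕ) + 1 < T} → X)
    (sm : {j : Fin (N + 1) // T ≤ (j : ℕ) + v + 1 ∧ (j : ℕ) + u + 1 ≤ T} → S) : ℝ :=
  ∑ xb : {j : Fin N // T ≤ (j : ℕ) + v + 1 ∧ ¬ (j : ℕ) + 1 < T} → X,
  ∑ sb : {j : Fin (N + 1) // T ≤ (j : ℕ) + v + 1 ∧ ¬ (j : ℕ) + u + 1 ≤ T} → S,
  ∑ yb : {j : Fin N // ¬ (j : ℕ) + u + 1 < T} → Y,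
    (if xm = (fun j => xf j.1) then (1:ℝ) else 0) *
    ((if xb = (fun j => xf j.1) then (1:ℝ) else 0) *
    ((if (∀ j : {j : Fin (N + 1) // T ≤ (j : ℕ) + v + 1 ∧ (j : ℕ) + u + 1 ≤ T},
          ((j : Fin (N + 1)) : ℕ) + v + 1 ≤ N → sm j = sf j) then (1:ℝ) else 0) *
    ((if (∀ j : {j : Fin (N + 1) // T ≤ (j : ℕ) + v + 1 ∧ ¬ (j : ℕ) + u + 1 ≤ T},
          ((j : Fin (N + 1)) : ℕ) + v + 1 ≤ N → sb j = sf j) then (1:ℝ) else 0) *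
    ((if yb = (fun j => yf j.1) then (1:ℝ) else 0) *
      Bfun ch src T (trajGlue u v T (fun _ => x₀) xm xb (fun _ => s₀) sm sb
        (fun j => h j.1) yb)))))

end Marginals
section Identities
open Classical
variable {X S Y : Type} [Fintype X] [Fintype S] [Fintype Y] {N u : ℕ}
variable (ch : NCFSC X S Y) (src : Source X S Y N u)

lemma ite_ind1 (P1 : Prop) [Decidable P1] (x : ℝ) :
    (if P1 then x else 0) = (if P1 then (1:ℝ) else 0) * x := by
  by_cases h1 : P1 <;> simp [h1]

lemma ite_ind3 (P1 P2 P3 : Prop) [Decidable P1] [Decidable P2] [Decidable P3] (x : ℝ) :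
    (if P1 ∧ P2 ∧ P3 then x else 0)
      = (if P1 then (1:ℝ) else 0) * ((if P2 then (1:ℝ) else 0) *
          ((if P3 then (1:ℝ) else 0) * x)) := by
  by_cases h1 : P1 <;> by_cases h2 : P2 <;> by_cases h3 : P3 <;> simp [h1, h2, h3]

lemma ite_ind6 (P1 P2 P3 P4 P5 P6 : Prop) [Decidable P1] [Decidable P2] [Decidable P3]
    [Decidable P4] [Decidable P5] [Decidable P6] (x : ℝ) :
    (if P1 ∧ P2 ∧ P3 ∧ P4 ∧ P5 ∧ P6 then x else 0)
      = (if P1 then (1:ℝ) else 0) * ((if P2 then (1:ℝ) else 0) * ((if P3 then (1:ℝ) else 0) *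
          ((if P4 then (1:ℝ) else 0) * ((if P5 then (1:ℝ) else 0) *
            ((if P6 then (1:ℝ) else 0) * x))))) := by
  by_cases h1 : P1 <;> by_cases h2 : P2 <;> by_cases h3 : P3 <;> by_cases h4 : P4 <;>
    by_cases h5 : P5 <;> by_cases h6 : P6 <;> simp [h1, h2, h3, h4, h5, h6]

lemma jointP_glued {v T : ℕ} (hT1 : u + 1 ≤ T) (huv : u ≤ v) (hM : IsMarkov v src)
    (h : Fin N → Y) (x₀ : X) (s₀ : S) (y₀ : Y)
    (xa : {j : Fin N // ¬ T ≤ (j : ℕ) + v + 1} → X)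
    (xm : {j : Fin N // T ≤ (j : ℕ) + v + 1 ∧ (j : ℕ) + 1 < T} → X)
    (xb : {j : Fin N // T ≤ (j : ℕ) + v + 1 ∧ ¬ (j : ℕ) + 1 < T} → X)
    (sa : {j : Fin (N + 1) // ¬ T ≤ (j : ℕ) + v + 1} → S)
    (sm : {j : Fin (N + 1) // T ≤ (j : ℕ) + v + 1 ∧ (j : ℕ) + u + 1 ≤ T} → S)
    (sb : {j : Fin (N + 1) // T ≤ (j : ℕ) + v + 1 ∧ ¬ (j : ℕ) + u + 1 ≤ T} → S)
    (yb : {j : Fin N // ¬ (j : ℕ) + u + 1 < T} → Y) :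
    jointP ch src (trajGlue u v T xa xm xb sa sm sb (fun j => h j.1) yb)
      = Afun ch src T (trajGlue u v T xa xm (fun _ => x₀) sa sm (fun _ => s₀)
          (fun j => h j.1) (fun _ => y₀))
        * Bfun ch src T (trajGlue u v T (fun _ => x₀) xm xb (fun _ => s₀) sm sb
            (fun j => h j.1) yb) := by
  rw [jointP_eq_AB ch src T]
  congr 1
  · apply Afun_congr ch src hT1
    · intro j hj; exact glue3_eq_of_b _ _ xa xm xb (fun _ => x₀) j hj
    · intro j hj; exact glue3_eq_of_b _ _ sa sm sb (fun _ => s₀) j hj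
    · intro j hj; exact glue2_eq_of_b _ (fun j => h j.1) yb (fun _ => y₀) j hj
  · apply Bfun_congr_coords ch src huv hM
    · intro j hj; exact glue3_eq_of_a _ _ xa (fun _ => x₀) xm xb j hj
    · intro j hj; exact glue3_eq_of_a _ _ sa (fun _ => s₀) sm sb j hj
    · rfl

/-- Identity (I): the probability of an output history factorises through the
window marginals. -/
lemma prE_hist (v T : ℕ) (hT1 : u + 1 ≤ T) (huv : u ≤ v) (hM : IsMarkov v src)
    (h : Fin N → Y) (x₀ : X) (s₀ : S) (y₀ : Y) :
    prE (jointP ch src) {ω : Traj X S Y N | ∀ j : Fin N, (j : ℕ) + u + 1 < T → ω.2.2 j = h j}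
      = ∑ xm : {j : Fin N // T ≤ (j : ℕ) + v + 1 ∧ (j : ℕ) + 1 < T} → X,
        ∑ sm : {j : Fin (N + 1) // T ≤ (j : ℕ) + v + 1 ∧ (j : ℕ) + u + 1 ≤ T} → S,
          Abar ch src v T h x₀ s₀ y₀ xm sm * Cbar ch src v T h x₀ s₀ xm sm := by
  classical
  rw [prE, sum_traj_expand u v T]
  have key : ∀ xa xm xb sa sm sb,
      (∑ ym : {j : Fin N // (j : ℕ) + u + 1 < T} → Y,
        ∑ yb : {j : Fin N // ¬ (j : ℕ) + u + 1 < T} → Y,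
          Set.indicator {ω : Traj X S Y N | ∀ j : Fin N, (j : ℕ) + u + 1 < T → ω.2.2 j = h j}
            (jointP ch src) (trajGlue u v T xa xm xb sa sm sb ym yb))
      = ∑ yb : {j : Fin N // ¬ (j : ℕ) + u + 1 < T} → Y,
          Afun ch src T (trajGlue u v T xa xm (fun _ => x₀) sa sm (fun _ => s₀)
            (fun j => h j.1) (fun _ => y₀))
          * Bfun ch src T (trajGlue u v T (fun _ => x₀) xm xb (fun _ => s₀) sm sb
              (fun j => h j.1) yb) := by
    intro xa xm xb sa sm sb
    have step1 : ∀ ym yb,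
        Set.indicator {ω : Traj X S Y N | ∀ j : Fin N, (j : ℕ) + u + 1 < T → ω.2.2 j = h j}
            (jointP ch src) (trajGlue u v T xa xm xb sa sm sb ym yb)
          = (if ym = (fun j => h j.1) then (1:ℝ) else 0) *
              (Afun ch src T (trajGlue u v T xa xm (fun _ => x₀) sa sm (fun _ => s₀)
                  (fun j => h j.1) (fun _ => y₀))
                * Bfun ch src T (trajGlue u v T (fun _ => x₀) xm xb (fun _ => s₀) sm sb
                    (fun j => h j.1) yb)) := by
      intro ym yb
      have hmem : trajGlue u v T xa xm xb sa sm sb ym yb ∈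
          {ω : Traj X S Y N | ∀ j : Fin N, (j : ℕ) + u + 1 < T → ω.2.2 j = h j}
          ↔ ym = (fun j => h j.1) := condY_iff u T ym yb h
      by_cases hym : ym = (fun j => h j.1)
      · rw [Set.indicator_of_mem (hmem.mpr hym), if_pos hym, one_mul]
        subst hym
        exact jointP_glued ch src hT1 huv hM h x₀ s₀ y₀ xa xm xb sa sm sb yb
      · rw [Set.indicator_of_notMem (fun hm => hym (hmem.mp hm)), if_neg hym, zero_mul]
    simp only [step1, ← Finset.mul_sum]
    rw [sum_boole_mul']
  simp only [key]
  exact factor7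
    (fun xa xm sa sm => Afun ch src T (trajGlue u v T xa xm (fun _ => x₀) sa sm (fun _ => s₀)
      (fun j => h j.1) (fun _ => y₀)))
    (fun xm xb sm sb yb => Bfun ch src T (trajGlue u v T (fun _ => x₀) xm xb (fun _ => s₀) sm sb
      (fun j => h j.1) yb))

end Identities
section Identities2
open Classical
variable {X S Y : Type} [Fintype X] [Fintype S] [Fintype Y] {N u : ℕ}
variable (ch : NCFSC X S Y) (src : Source X S Y N u)

/-- Identity (II): probability of a window event together with the history. -/
lemma prE_W (v T : ℕ) (hT1 : u + 1 ≤ T) (huv : u ≤ v) (hM : IsMarkov v src)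
    (h : Fin N → Y) (x₀ : X) (s₀ : S) (y₀ : Y) (xfull : Fin N → X) (sfull : Fin (N + 1) → S) :
    prE (jointP ch src)
        ({ω : Traj X S Y N |
            (∀ j : Fin N, T ≤ (j : ℕ) + v + 1 ∧ (j : ℕ) + 1 < T → ω.1 j = xfull j) ∧
              ∀ j : Fin (N + 1), T ≤ (j : ℕ) + v + 1 ∧ (j : ℕ) + u + 1 ≤ T → ω.2.1 j = sfull j}
          ∩ {ω : Traj X S Y N | ∀ j : Fin N, (j : ℕ) + u + 1 < T → ω.2.2 j = h j})
      = Abar ch src v T h x₀ s₀ y₀ (fun j => xfull j.1) (fun j => sfull j.1)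
          * Cbar ch src v T h x₀ s₀ (fun j => xfull j.1) (fun j => sfull j.1) := by
  classical
  rw [prE, sum_traj_expand u v T]
  have key : ∀ xa xm xb sa sm sb,
      (∑ ym : {j : Fin N // (j : ℕ) + u + 1 < T} → Y,
        ∑ yb : {j : Fin N // ¬ (j : ℕ) + u + 1 < T} → Y,
          Set.indicator
            ({ω : Traj X S Y N |
                (∀ j : Fin N, T ≤ (j : ℕ) + v + 1 ∧ (j : ℕ) + 1 < T → ω.1 j = xfull j) ∧
                  ∀ j : Fin (N + 1), T ≤ (j : ℕ) + v + 1 ∧ (j : ℕ) + u + 1 ≤ T →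
                    ω.2.1 j = sfull j}
              ∩ {ω : Traj X S Y N | ∀ j : Fin N, (j : ℕ) + u + 1 < T → ω.2.2 j = h j})
            (jointP ch src) (trajGlue u v T xa xm xb sa sm sb ym yb))
      = ∑ yb : {j : Fin N // ¬ (j : ℕ) + u + 1 < T} → Y,
          Afun ch src T (trajGlue u v T xa xm (fun _ => x₀) sa sm (fun _ => s₀)
            (fun j => h j.1) (fun _ => y₀))
          * ((if xm = (fun j => xfull j.1) then (1:ℝ) else 0) *
              ((if sm = (fun j => sfull j.1) then (1:ℝ) else 0) *
                Bfun ch src T (trajGlue u v T (fun _ => x₀) xm xb (fun _ => s₀) sm sb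
                  (fun j => h j.1) yb))) := by
    intro xa xm xb sa sm sb
    have step1 : ∀ ym yb,
        Set.indicator
            ({ω : Traj X S Y N |
                (∀ j : Fin N, T ≤ (j : ℕ) + v + 1 ∧ (j : ℕ) + 1 < T → ω.1 j = xfull j) ∧
                  ∀ j : Fin (N + 1), T ≤ (j : ℕ) + v + 1 ∧ (j : ℕ) + u + 1 ≤ T →
                    ω.2.1 j = sfull j}
              ∩ {ω : Traj X S Y N | ∀ j : Fin N, (j : ℕ) + u + 1 < T → ω.2.2 j = h j})
            (jointP ch src) (trajGlue u v T xa xm xb sa sm sb ym yb)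
          = (if ym = (fun j => h j.1) then (1:ℝ) else 0) *
              (Afun ch src T (trajGlue u v T xa xm (fun _ => x₀) sa sm (fun _ => s₀)
                  (fun j => h j.1) (fun _ => y₀))
                * ((if xm = (fun j => xfull j.1) then (1:ℝ) else 0) *
                    ((if sm = (fun j => sfull j.1) then (1:ℝ) else 0) *
                      Bfun ch src T (trajGlue u v T (fun _ => x₀) xm xb (fun _ => s₀) sm sb
                        (fun j => h j.1) yb)))) := by
      intro ym yb
      have hmem : trajGlue u v T xa xm xb sa sm sb ym yb ∈
          ({ω : Traj X S Y N |
              (∀ j : Fin N, T ≤ (j : ℕ) + v + 1 ∧ (j : ℕ) + 1 < T → ω.1 j = xfull j) ∧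
                ∀ j : Fin (N + 1), T ≤ (j : ℕ) + v + 1 ∧ (j : ℕ) + u + 1 ≤ T →
                  ω.2.1 j = sfull j}
            ∩ {ω : Traj X S Y N | ∀ j : Fin N, (j : ℕ) + u + 1 < T → ω.2.2 j = h j})
          ↔ (ym = (fun j => h j.1) ∧ xm = (fun j => xfull j.1) ∧ sm = fun j => sfull j.1) := by
        simp only [Set.mem_inter_iff, Set.mem_setOf_eq, trajGlue]
        rw [condXM_iff, condSM_iff, condY_iff]
        tauto
      by_cases hym : ym = (fun j => h j.1)
      · by_cases hxm : xm = (fun j => xfull j.1)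
        · by_cases hsm : sm = (fun j => sfull j.1)
          · rw [Set.indicator_of_mem (hmem.mpr ⟨hym, hxm, hsm⟩), if_pos hym, if_pos hxm,
              if_pos hsm, one_mul, one_mul, one_mul]
            subst hym
            exact jointP_glued ch src hT1 huv hM h x₀ s₀ y₀ xa xm xb sa sm sb yb
          · rw [Set.indicator_of_notMem (fun hm => hsm (hmem.mp hm).2.2), if_neg hsm]
            simp
        · rw [Set.indicator_of_notMem (fun hm => hxm (hmem.mp hm).2.1), if_neg hxm]
          simp
      · rw [Set.indicator_of_notMem (fun hm => hym (hmem.mp hm).1), if_neg hym, zero_mul]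
    simp only [step1, ← Finset.mul_sum]
    rw [sum_boole_mul']
  simp only [key]
  rw [factor7
    (fun xa xm sa sm => Afun ch src T (trajGlue u v T xa xm (fun _ => x₀) sa sm (fun _ => s₀)
      (fun j => h j.1) (fun _ => y₀)))
    (fun xm xb sm sb yb =>
      (if xm = (fun j => xfull j.1) then (1:ℝ) else 0) *
        ((if sm = (fun j => sfull j.1) then (1:ℝ) else 0) *
          Bfun ch src T (trajGlue u v T (fun _ => x₀) xm xb (fun _ => s₀) sm sb
            (fun j => h j.1) yb)))]
  have pull : ∀ (xm : {j : Fin N // T ≤ (j : ℕ) + v + 1 ∧ (j : ℕ) + 1 < T} → X)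
      (sm : {j : Fin (N + 1) // T ≤ (j : ℕ) + v + 1 ∧ (j : ℕ) + u + 1 ≤ T} → S),
      (∑ xb : {j : Fin N // T ≤ (j : ℕ) + v + 1 ∧ ¬ (j : ℕ) + 1 < T} → X,
        ∑ sb : {j : Fin (N + 1) // T ≤ (j : ℕ) + v + 1 ∧ ¬ (j : ℕ) + u + 1 ≤ T} → S,
        ∑ yb : {j : Fin N // ¬ (j : ℕ) + u + 1 < T} → Y,
          (if xm = (fun j => xfull j.1) then (1:ℝ) else 0) *
            ((if sm = (fun j => sfull j.1) then (1:ℝ) else 0) *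
              Bfun ch src T (trajGlue u v T (fun _ => x₀) xm xb (fun _ => s₀) sm sb
                (fun j => h j.1) yb)))
        = (if xm = (fun j => xfull j.1) then (1:ℝ) else 0) *
            ((if sm = (fun j => sfull j.1) then (1:ℝ) else 0) *
              Cbar ch src v T h x₀ s₀ xm sm) := by
    intro xm sm
    rw [Cbar]
    simp only [← Finset.mul_sum]
  calc
    (∑ xm : {j : Fin N // T ≤ (j : ℕ) + v + 1 ∧ (j : ℕ) + 1 < T} → X,
      ∑ sm : {j : Fin (N + 1) // T ≤ (j : ℕ) + v + 1 ∧ (j : ℕ) + u + 1 ≤ T} → S,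
        (∑ xa : {j : Fin N // ¬ T ≤ (j : ℕ) + v + 1} → X,
          ∑ sa : {j : Fin (N + 1) // ¬ T ≤ (j : ℕ) + v + 1} → S,
            Afun ch src T (trajGlue u v T xa xm (fun _ => x₀) sa sm (fun _ => s₀)
              (fun j => h j.1) (fun _ => y₀)))
          * (∑ xb : {j : Fin N // T ≤ (j : ℕ) + v + 1 ∧ ¬ (j : ℕ) + 1 < T} → X,
            ∑ sb : {j : Fin (N + 1) // T ≤ (j : ℕ) + v + 1 ∧ ¬ (j : ℕ) + u + 1 ≤ T} → S,
            ∑ yb : {j : Fin N // ¬ (j : ℕ) + u + 1 < T} → Y,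
              (if xm = (fun j => xfull j.1) then (1:ℝ) else 0) *
                ((if sm = (fun j => sfull j.1) then (1:ℝ) else 0) *
                  Bfun ch src T (trajGlue u v T (fun _ => x₀) xm xb (fun _ => s₀) sm sb
                    (fun j => h j.1) yb))))
      = ∑ xm : {j : Fin N // T ≤ (j : ℕ) + v + 1 ∧ (j : ℕ) + 1 < T} → X,
        ∑ sm : {j : Fin (N + 1) // T ≤ (j : ℕ) + v + 1 ∧ (j : ℕ) + u + 1 ≤ T} → S,
          (if xm = (fun j => xfull j.1) then (1:ℝ) else 0) *
            ((if sm = (fun j => sfull j.1) then (1:ℝ) else 0) *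
              (Abar ch src v T h x₀ s₀ y₀ xm sm * Cbar ch src v T h x₀ s₀ xm sm)) := by
        refine Finset.sum_congr rfl fun xm _ => Finset.sum_congr rfl fun sm _ => ?_
        rw [pull xm sm, Abar]
        ring
    _ = ∑ xm : {j : Fin N // T ≤ (j : ℕ) + v + 1 ∧ (j : ℕ) + 1 < T} → X,
          (if xm = (fun j => xfull j.1) then (1:ℝ) else 0) *
            ∑ sm : {j : Fin (N + 1) // T ≤ (j : ℕ) + v + 1 ∧ (j : ℕ) + u + 1 ≤ T} → S,
              (if sm = (fun j => sfull j.1) then (1:ℝ) else 0) *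
                (Abar ch src v T h x₀ s₀ y₀ xm sm * Cbar ch src v T h x₀ s₀ xm sm) := by
        exact Finset.sum_congr rfl fun xm _ => (Finset.mul_sum _ _ _).symm
    _ = Abar ch src v T h x₀ s₀ y₀ (fun j => xfull j.1) (fun j => sfull j.1)
          * Cbar ch src v T h x₀ s₀ (fun j => xfull j.1) (fun j => sfull j.1) := by
        rw [sum_boole_mul', sum_boole_mul']

/-- Identity (III): probability of the future event together with the history. -/
lemma prE_E (v T : ℕ) (hT1 : u + 1 ≤ T) (huv : u ≤ v) (hM : IsMarkov v src)
    (h : Fin N → Y) (x₀ : X) (s₀ : S) (y₀ : Y)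
    (xf : Fin N → X) (sf : Fin (N + 1) → S) (yf : Fin N → Y) :
    prE (jointP ch src)
        ({ω : Traj X S Y N |
            (∀ j : Fin N, T ≤ (j : ℕ) + v + 1 → ω.1 j = xf j) ∧
              (∀ j : Fin (N + 1),
                T ≤ (j : ℕ) + v + 1 ∧ (j : ℕ) + v + 1 ≤ N → ω.2.1 j = sf j) ∧
                ∀ j : Fin N, T ≤ (j : ℕ) + u + 1 → ω.2.2 j = yf j}
          ∩ {ω : Traj X S Y N | ∀ j : Fin N, (j : ℕ) + u + 1 < T → ω.2.2 j = h j})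
      = ∑ xm : {j : Fin N // T ≤ (j : ℕ) + v + 1 ∧ (j : ℕ) + 1 < T} → X,
        ∑ sm : {j : Fin (N + 1) // T ≤ (j : ℕ) + v + 1 ∧ (j : ℕ) + u + 1 ≤ T} → S,
          Abar ch src v T h x₀ s₀ y₀ xm sm * Dbar ch src v T h x₀ s₀ xf sf yf xm sm := by
  classical
  rw [prE, sum_traj_expand u v T]
  have key : ∀ xa xm xb sa sm sb,
      (∑ ym : {j : Fin N // (j : ℕ) + u + 1 < T} → Y,
        ∑ yb : {j : Fin N // ¬ (j : ℕ) + u + 1 < T} → Y,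
          Set.indicator
            ({ω : Traj X S Y N |
                (∀ j : Fin N, T ≤ (j : ℕ) + v + 1 → ω.1 j = xf j) ∧
                  (∀ j : Fin (N + 1),
                    T ≤ (j : ℕ) + v + 1 ∧ (j : ℕ) + v + 1 ≤ N → ω.2.1 j = sf j) ∧
                    ∀ j : Fin N, T ≤ (j : ℕ) + u + 1 → ω.2.2 j = yf j}
              ∩ {ω : Traj X S Y N | ∀ j : Fin N, (j : ℕ) + u + 1 < T → ω.2.2 j = h j})
            (jointP ch src) (trajGlue u v T xa xm xb sa sm sb ym yb))
      = ∑ yb : {j : Fin N // ¬ (j : ℕ) + u + 1 < T} → Y,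
          Afun ch src T (trajGlue u v T xa xm (fun _ => x₀) sa sm (fun _ => s₀)
            (fun j => h j.1) (fun _ => y₀))
          * ((if xm = (fun j => xf j.1) then (1:ℝ) else 0) *
            ((if xb = (fun j => xf j.1) then (1:ℝ) else 0) *
            ((if (∀ j : {j : Fin (N + 1) // T ≤ (j : ℕ) + v + 1 ∧ (j : ℕ) + u + 1 ≤ T},
                  ((j : Fin (N + 1)) : ℕ) + v + 1 ≤ N → sm j = sf j) then (1:ℝ) else 0) *
            ((if (∀ j : {j : Fin (N + 1) // T ≤ (j : ℕ) + v + 1 ∧ ¬ (j : ℕ) + u + 1 ≤ T},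
                  ((j : Fin (N + 1)) : ℕ) + v + 1 ≤ N → sb j = sf j) then (1:ℝ) else 0) *
            ((if yb = (fun j => yf j.1) then (1:ℝ) else 0) *
              Bfun ch src T (trajGlue u v T (fun _ => x₀) xm xb (fun _ => s₀) sm sb
                (fun j => h j.1) yb)))))) := by
    intro xa xm xb sa sm sb
    have step1 : ∀ ym yb,
        Set.indicator
            ({ω : Traj X S Y N |
                (∀ j : Fin N, T ≤ (j : ℕ) + v + 1 → ω.1 j = xf j) ∧
                  (∀ j : Fin (N + 1),
                    T ≤ (j : ℕ) + v + 1 ∧ (j : ℕ) + v + 1 ≤ N → ω.2.1 j = sf j) ∧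
                    ∀ j : Fin N, T ≤ (j : ℕ) + u + 1 → ω.2.2 j = yf j}
              ∩ {ω : Traj X S Y N | ∀ j : Fin N, (j : ℕ) + u + 1 < T → ω.2.2 j = h j})
            (jointP ch src) (trajGlue u v T xa xm xb sa sm sb ym yb)
          = (if ym = (fun j => h j.1) then (1:ℝ) else 0) *
              (Afun ch src T (trajGlue u v T xa xm (fun _ => x₀) sa sm (fun _ => s₀)
                  (fun j => h j.1) (fun _ => y₀))
                * ((if xm = (fun j => xf j.1) then (1:ℝ) else 0) *
                  ((if xb = (fun j => xf j.1) then (1:ℝ) else 0) *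
                  ((if (∀ j : {j : Fin (N + 1) // T ≤ (j : ℕ) + v + 1 ∧ (j : ℕ) + u + 1 ≤ T},
                        ((j : Fin (N + 1)) : ℕ) + v + 1 ≤ N → sm j = sf j)
                      then (1:ℝ) else 0) *
                  ((if (∀ j : {j : Fin (N + 1) // T ≤ (j : ℕ) + v + 1 ∧ ¬ (j : ℕ) + u + 1 ≤ T},
                        ((j : Fin (N + 1)) : ℕ) + v + 1 ≤ N → sb j = sf j)
                      then (1:ℝ) else 0) *
                  ((if yb = (fun j => yf j.1) then (1:ℝ) else 0) *
                    Bfun ch src T (trajGlue u v T (fun _ => x₀) xm xb (fun _ => s₀) sm sb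
                      (fun j => h j.1) yb))))))) := by
      intro ym yb
      have hmem : trajGlue u v T xa xm xb sa sm sb ym yb ∈
          ({ω : Traj X S Y N |
              (∀ j : Fin N, T ≤ (j : ℕ) + v + 1 → ω.1 j = xf j) ∧
                (∀ j : Fin (N + 1),
                  T ≤ (j : ℕ) + v + 1 ∧ (j : ℕ) + v + 1 ≤ N → ω.2.1 j = sf j) ∧
                  ∀ j : Fin N, T ≤ (j : ℕ) + u + 1 → ω.2.2 j = yf j}
            ∩ {ω : Traj X S Y N | ∀ j : Fin N, (j : ℕ) + u + 1 < T → ω.2.2 j = h j})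
          ↔ (ym = (fun j => h j.1) ∧ (xm = fun j => xf j.1) ∧ (xb = fun j => xf j.1) ∧
              (∀ j : {j : Fin (N + 1) // T ≤ (j : ℕ) + v + 1 ∧ (j : ℕ) + u + 1 ≤ T},
                ((j : Fin (N + 1)) : ℕ) + v + 1 ≤ N → sm j = sf j) ∧
              (∀ j : {j : Fin (N + 1) // T ≤ (j : ℕ) + v + 1 ∧ ¬ (j : ℕ) + u + 1 ≤ T},
                ((j : Fin (N + 1)) : ℕ) + v + 1 ≤ N → sb j = sf j) ∧
              yb = fun j => yf j.1) := by
        simp only [Set.mem_inter_iff, Set.mem_setOf_eq, trajGlue]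
        rw [condXE_iff, condSE_iff, condYB_iff, condY_iff]
        tauto
      rw [Set.indicator_apply]
      rw [if_congr hmem (rfl : jointP ch src (trajGlue u v T xa xm xb sa sm sb ym yb)
        = jointP ch src (trajGlue u v T xa xm xb sa sm sb ym yb)) rfl]
      rw [ite_ind6]
      by_cases hym : ym = (fun j => h j.1)
      · subst hym
        congr 1
        rw [jointP_glued ch src hT1 huv hM h x₀ s₀ y₀ xa xm xb sa sm sb yb]
        ring
      · rw [if_neg hym]; ring
    simp only [step1, ← Finset.mul_sum]
    rw [sum_boole_mul']
  simp only [key]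
  exact factor7
    (fun xa xm sa sm => Afun ch src T (trajGlue u v T xa xm (fun _ => x₀) sa sm (fun _ => s₀)
      (fun j => h j.1) (fun _ => y₀)))
    (fun xm xb sm sb yb =>
      (if xm = (fun j => xf j.1) then (1:ℝ) else 0) *
        ((if xb = (fun j => xf j.1) then (1:ℝ) else 0) *
        ((if (∀ j : {j : Fin (N + 1) // T ≤ (j : ℕ) + v + 1 ∧ (j : ℕ) + u + 1 ≤ T},
              ((j : Fin (N + 1)) : ℕ) + v + 1 ≤ N → sm j = sf j) then (1:ℝ) else 0) *
        ((if (∀ j : {j : Fin (N + 1) // T ≤ (j : ℕ) + v + 1 ∧ ¬ (j : ℕ) + u + 1 ≤ T},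
              ((j : Fin (N + 1)) : ℕ) + v + 1 ≤ N → sb j = sf j) then (1:ℝ) else 0) *
        ((if yb = (fun j => yf j.1) then (1:ℝ) else 0) *
          Bfun ch src T (trajGlue u v T (fun _ => x₀) xm xb (fun _ => s₀) sm sb
            (fun j => h j.1) yb))))))

end Identities2
section Final
open Classical
variable {X S Y : Type} [Fintype X] [Fintype S] [Fintype Y] {N u : ℕ}
variable (ch : NCFSC X S Y) (src : Source X S Y N u)

lemma ind_nonneg (P : Prop) [Decidable P] : 0 ≤ (if P then (1:ℝ) else 0) := by
  split <;> norm_num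

lemma ind_mul_le (P : Prop) [Decidable P] (x : ℝ) (hx : 0 ≤ x) :
    (if P then (1:ℝ) else 0) * x ≤ x := by
  split
  · simp
  · simpa using hx

lemma Bfun_glued_hist {v T : ℕ} (yh yh' : Fin N → Y)
    (hpol : ∀ t : Fin N, T ≤ (t : ℕ) + 1 →
      ∀ (xfu : Fin N → X) (sfu : Fin (N + 1) → S) (yc yc' : Fin N → Y),
        (∀ j : Fin N, (j : ℕ) + u + 1 < T → yc j = yh j) →
        (∀ j : Fin N, (j : ℕ) + u + 1 < T → yc' j = yh' j) →
        (∀ j : Fin N, T ≤ (j : ℕ) + u + 1 → yc j = yc' j) →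
        ∀ a : X, src.pol t xfu sfu yc a = src.pol t xfu sfu yc' a)
    (x₀ : X) (s₀ : S)
    (xm : {j : Fin N // T ≤ (j : ℕ) + v + 1 ∧ (j : ℕ) + 1 < T} → X)
    (xb : {j : Fin N // T ≤ (j : ℕ) + v + 1 ∧ ¬ (j : ℕ) + 1 < T} → X)
    (sm : {j : Fin (N + 1) // T ≤ (j : ℕ) + v + 1 ∧ (j : ℕ) + u + 1 ≤ T} → S)
    (sb : {j : Fin (N + 1) // T ≤ (j : ℕ) + v + 1 ∧ ¬ (j : ℕ) + u + 1 ≤ T} → S)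
    (yb : {j : Fin N // ¬ (j : ℕ) + u + 1 < T} → Y) :
    Bfun ch src T (trajGlue u v T (fun _ => x₀) xm xb (fun _ => s₀) sm sb
        (fun j => yh j.1) yb)
      = Bfun ch src T (trajGlue u v T (fun _ => x₀) xm xb (fun _ => s₀) sm sb
          (fun j => yh' j.1) yb) := by
  apply Bfun_congr_hist ch src yh yh' hpol
  · rfl
  · rfl
  · intro j hj
    simp only [trajGlue]
    rw [glue2_neg _ (fun j => yh j.1) yb j (by omega), glue2_neg _ (fun j => yh' j.1) yb j (by omega)]
  · intro j hj
    simp only [trajGlue]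
    rw [glue2_pos _ (fun j => yh j.1) yb j hj]
  · intro j hj
    simp only [trajGlue]
    rw [glue2_pos _ (fun j => yh' j.1) yb j hj]

lemma Cbar_hist {v T : ℕ} (yh yh' : Fin N → Y)
    (hpol : ∀ t : Fin N, T ≤ (t : ℕ) + 1 →
      ∀ (xfu : Fin N → X) (sfu : Fin (N + 1) → S) (yc yc' : Fin N → Y),
        (∀ j : Fin N, (j : ℕ) + u + 1 < T → yc j = yh j) →
        (∀ j : Fin N, (j : ℕ) + u + 1 < T → yc' j = yh' j) →
        (∀ j : Fin N, T ≤ (j : ℕ) + u + 1 → yc j = yc' j) →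
        ∀ a : X, src.pol t xfu sfu yc a = src.pol t xfu sfu yc' a)
    (x₀ : X) (s₀ : S)
    (xm : {j : Fin N // T ≤ (j : ℕ) + v + 1 ∧ (j : ℕ) + 1 < T} → X)
    (sm : {j : Fin (N + 1) // T ≤ (j : ℕ) + v + 1 ∧ (j : ℕ) + u + 1 ≤ T} → S) :
    Cbar ch src v T yh x₀ s₀ xm sm = Cbar ch src v T yh' x₀ s₀ xm sm := by
  unfold Cbar
  refine Finset.sum_congr rfl fun xb _ => Finset.sum_congr rfl fun sb _ =>
    Finset.sum_congr rfl fun yb _ => ?_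
  exact Bfun_glued_hist ch src yh yh' hpol x₀ s₀ xm xb sm sb yb

lemma Dbar_hist {v T : ℕ} (yh yh' : Fin N → Y)
    (hpol : ∀ t : Fin N, T ≤ (t : ℕ) + 1 →
      ∀ (xfu : Fin N → X) (sfu : Fin (N + 1) → S) (yc yc' : Fin N → Y),
        (∀ j : Fin N, (j : ℕ) + u + 1 < T → yc j = yh j) →
        (∀ j : Fin N, (j : ℕ) + u + 1 < T → yc' j = yh' j) →
        (∀ j : Fin N, T ≤ (j : ℕ) + u + 1 → yc j = yc' j) →
        ∀ a : X, src.pol t xfu sfu yc a = src.pol t xfu sfu yc' a)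
    (x₀ : X) (s₀ : S) (xf : Fin N → X) (sf : Fin (N + 1) → S) (yf : Fin N → Y)
    (xm : {j : Fin N // T ≤ (j : ℕ) + v + 1 ∧ (j : ℕ) + 1 < T} → X)
    (sm : {j : Fin (N + 1) // T ≤ (j : ℕ) + v + 1 ∧ (j : ℕ) + u + 1 ≤ T} → S) :
    Dbar ch src v T yh x₀ s₀ xf sf yf xm sm = Dbar ch src v T yh' x₀ s₀ xf sf yf xm sm := by
  unfold Dbar
  refine Finset.sum_congr rfl fun xb _ => Finset.sum_congr rfl fun sb _ =>
    Finset.sum_congr rfl fun yb _ => ?_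
  rw [Bfun_glued_hist ch src yh yh' hpol x₀ s₀ xm xb sm sb yb]

lemma Dbar_nonneg {v T : ℕ} (h : Fin N → Y) (x₀ : X) (s₀ : S)
    (xf : Fin N → X) (sf : Fin (N + 1) → S) (yf : Fin N → Y)
    (xm : {j : Fin N // T ≤ (j : ℕ) + v + 1 ∧ (j : ℕ) + 1 < T} → X)
    (sm : {j : Fin (N + 1) // T ≤ (j : ℕ) + v + 1 ∧ (j : ℕ) + u + 1 ≤ T} → S) :
    0 ≤ Dbar ch src v T h x₀ s₀ xf sf yf xm sm := by
  unfold Dbar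
  refine Finset.sum_nonneg fun xb _ => Finset.sum_nonneg fun sb _ =>
    Finset.sum_nonneg fun yb _ => ?_
  have hB := Bfun_nonneg ch src T (trajGlue u v T (fun _ => x₀) xm xb (fun _ => s₀) sm sb
    (fun j => h j.1) yb)
  exact mul_nonneg (ind_nonneg _) (mul_nonneg (ind_nonneg _) (mul_nonneg (ind_nonneg _)
    (mul_nonneg (ind_nonneg _) (mul_nonneg (ind_nonneg _) hB))))

lemma Dbar_le_Cbar {v T : ℕ} (h : Fin N → Y) (x₀ : X) (s₀ : S)
    (xf : Fin N → X) (sf : Fin (N + 1) → S) (yf : Fin N → Y)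
    (xm : {j : Fin N // T ≤ (j : ℕ) + v + 1 ∧ (j : ℕ) + 1 < T} → X)
    (sm : {j : Fin (N + 1) // T ≤ (j : ℕ) + v + 1 ∧ (j : ℕ) + u + 1 ≤ T} → S) :
    Dbar ch src v T h x₀ s₀ xf sf yf xm sm ≤ Cbar ch src v T h x₀ s₀ xm sm := by
  unfold Dbar Cbar
  refine Finset.sum_le_sum fun xb _ => Finset.sum_le_sum fun sb _ =>
    Finset.sum_le_sum fun yb _ => ?_
  have hB := Bfun_nonneg ch src T (trajGlue u v T (fun _ => x₀) xm xb (fun _ => s₀) sm sb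
    (fun j => h j.1) yb)
  have n5 : 0 ≤ (if yb = (fun j => yf j.1) then (1:ℝ) else 0) *
      Bfun ch src T (trajGlue u v T (fun _ => x₀) xm xb (fun _ => s₀) sm sb
        (fun j => h j.1) yb) := mul_nonneg (ind_nonneg _) hB
  have n4 : 0 ≤ (if (∀ j : {j : Fin (N + 1) // T ≤ (j : ℕ) + v + 1 ∧ ¬ (j : ℕ) + u + 1 ≤ T},
      ((j : Fin (N + 1)) : ℕ) + v + 1 ≤ N → sb j = sf j) then (1:ℝ) else 0) * _ :=
    mul_nonneg (ind_nonneg _) n5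
  have n3 : 0 ≤ (if (∀ j : {j : Fin (N + 1) // T ≤ (j : ℕ) + v + 1 ∧ (j : ℕ) + u + 1 ≤ T},
      ((j : Fin (N + 1)) : ℕ) + v + 1 ≤ N → sm j = sf j) then (1:ℝ) else 0) * _ :=
    mul_nonneg (ind_nonneg _) n4
  have n2 : 0 ≤ (if xb = (fun j => xf j.1) then (1:ℝ) else 0) * _ :=
    mul_nonneg (ind_nonneg _) n3
  exact le_trans (ind_mul_le _ _ n2) (le_trans (ind_mul_le _ _ n3)
    (le_trans (ind_mul_le _ _ n4) (le_trans (ind_mul_le _ _ n5) (ind_mul_le _ _ hB))))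

end Final
/-- **key lemma for Theorem 3, equation (samemeasure).**
For a non-controllable FSC with a source in `𝒫_v(u,u)` (`0 ≤ u ≤ v`), fix
a 1-based time `T` with `u+1 ≤ T ≤ N`.  If two positive-probability
output histories `y^{T-u-1}`, `ỹ^{T-u-1}` induce the same a posteriori
vector `α_{T-1}` and the same policies are used after time `T` (i.e. at
every `t ≥ T` the policy takes the same value on any two output arguments
extending the two histories by a common continuation), then the
conditional law of `(X_{T-v}^N, S_{T-v-1}^{N-v-1}, Y_{T-u}^N)` given
`Y^{T-u-1}` is the same for the two histories. -/
theorem statement13 {X S Y : Type} [Fintype X] [Fintype S] [Fintype Y] {N u : ℕ}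
    (ch : NCFSC X S Y) (src : Source X S Y N u) (v : ℕ) (huv : u ≤ v)
    (hM : IsMarkov v src)
    (T : ℕ) (hT1 : u + 1 ≤ T) (hTN : T ≤ N)
    (yh yh' : Fin N → Y)
    (hpos : 0 < prE (jointP ch src)
      {ω : Traj X S Y N | ∀ j : Fin N, (j : ℕ) + u + 1 < T → ω.2.2 j = yh j})
    (hpos' : 0 < prE (jointP ch src)
      {ω : Traj X S Y N | ∀ j : Fin N, (j : ℕ) + u + 1 < T → ω.2.2 j = yh' j})
    (halpha : alphaWinEq v ch src ⟨T - 1, by omega⟩ yh yh')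
    (hpol : ∀ t : Fin N, T ≤ (t : ℕ) + 1 →
      ∀ (xf : Fin N → X) (sf : Fin (N + 1) → S) (yc yc' : Fin N → Y),
        (∀ j : Fin N, (j : ℕ) + u + 1 < T → yc j = yh j) →
        (∀ j : Fin N, (j : ℕ) + u + 1 < T → yc' j = yh' j) →
        (∀ j : Fin N, T ≤ (j : ℕ) + u + 1 → yc j = yc' j) →
        ∀ a : X, src.pol t xf sf yc a = src.pol t xf sf yc' a) :
    ∀ (xf : Fin N → X) (sf : Fin (N + 1) → S) (yf : Fin N → Y),
      condPr (jointP ch src)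
          {ω : Traj X S Y N |
            (∀ j : Fin N, T ≤ (j : ℕ) + v + 1 → ω.1 j = xf j) ∧
              (∀ j : Fin (N + 1),
                T ≤ (j : ℕ) + v + 1 ∧ (j : ℕ) + v + 1 ≤ N → ω.2.1 j = sf j) ∧
                ∀ j : Fin N, T ≤ (j : ℕ) + u + 1 → ω.2.2 j = yf j}
          {ω : Traj X S Y N | ∀ j : Fin N, (j : ℕ) + u + 1 < T → ω.2.2 j = yh j} =
        condPr (jointP ch src)
          {ω : Traj X S Y N |
            (∀ j : Fin N, T ≤ (j : ℕ) + v + 1 → ω.1 j = xf j) ∧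
              (∀ j : Fin (N + 1),
                T ≤ (j : ℕ) + v + 1 ∧ (j : ℕ) + v + 1 ≤ N → ω.2.1 j = sf j) ∧
                ∀ j : Fin N, T ≤ (j : ℕ) + u + 1 → ω.2.2 j = yf j}
          {ω : Traj X S Y N | ∀ j : Fin N, (j : ℕ) + u + 1 < T → ω.2.2 j = yh' j} := by
  classical
  have hN1 : 1 ≤ N := by omega
  have hXne : Nonempty X := by
    rcases isEmpty_or_nonempty X with hX | hX
    · exfalso
      haveI : IsEmpty (Traj X S Y N) := ⟨fun ω => IsEmpty.false (ω.1 ⟨0, by omega⟩)⟩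
      have h0 : prE (jointP ch src)
          {ω : Traj X S Y N | ∀ j : Fin N, (j : ℕ) + u + 1 < T → ω.2.2 j = yh j} = 0 := by
        rw [prE, Finset.univ_eq_empty, Finset.sum_empty]
      rw [h0] at hpos
      exact lt_irrefl 0 hpos
    · exact hX
  have hSne : Nonempty S := by
    rcases isEmpty_or_nonempty S with hS | hS
    · exfalso
      haveI : IsEmpty (Traj X S Y N) := ⟨fun ω => IsEmpty.false (ω.2.1 0)⟩
      have h0 : prE (jointP ch src)
          {ω : Traj X S Y N | ∀ j : Fin N, (j : ℕ) + u + 1 < T → ω.2.2 j = yh j} = 0 := by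
        rw [prE, Finset.univ_eq_empty, Finset.sum_empty]
      rw [h0] at hpos
      exact lt_irrefl 0 hpos
    · exact hS
  have hYne : Nonempty Y := by
    rcases isEmpty_or_nonempty Y with hY | hY
    · exfalso
      haveI : IsEmpty (Traj X S Y N) := ⟨fun ω => IsEmpty.false (ω.2.2 ⟨0, by omega⟩)⟩
      have h0 : prE (jointP ch src)
          {ω : Traj X S Y N | ∀ j : Fin N, (j : ℕ) + u + 1 < T → ω.2.2 j = yh j} = 0 := by
        rw [prE, Finset.univ_eq_empty, Finset.sum_empty]
      rw [h0] at hpos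
      exact lt_irrefl 0 hpos
    · exact hY
  obtain ⟨x₀⟩ := hXne
  obtain ⟨s₀⟩ := hSne
  obtain ⟨y₀⟩ := hYne
  intro xf sf yf
  -- the per-window α-identity in marginal form
  have hAlpha : ∀ (xm : {j : Fin N // T ≤ (j : ℕ) + v + 1 ∧ (j : ℕ) + 1 < T} → X)
      (sm : {j : Fin (N + 1) // T ≤ (j : ℕ) + v + 1 ∧ (j : ℕ) + u + 1 ≤ T} → S),
      Abar ch src v T yh x₀ s₀ y₀ xm sm * Cbar ch src v T yh x₀ s₀ xm sm /
          prE (jointP ch src)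
            {ω : Traj X S Y N | ∀ j : Fin N, (j : ℕ) + u + 1 < T → ω.2.2 j = yh j}
        = Abar ch src v T yh' x₀ s₀ y₀ xm sm * Cbar ch src v T yh' x₀ s₀ xm sm /
            prE (jointP ch src)
              {ω : Traj X S Y N | ∀ j : Fin N, (j : ℕ) + u + 1 < T → ω.2.2 j = yh' j} := by
    intro xm sm
    set xfull : Fin N → X :=
      fun j => if hj : T ≤ (j : ℕ) + v + 1 ∧ (j : ℕ) + 1 < T then xm ⟨j, hj⟩ else x₀ with hxf
    set sfull : Fin (N + 1) → S :=
      fun j => if hj : T ≤ (j : ℕ) + v + 1 ∧ (j : ℕ) + u + 1 ≤ T then sm ⟨j, hj⟩ else s₀ with hsf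
    have hxr : (fun j : {j : Fin N // T ≤ (j : ℕ) + v + 1 ∧ (j : ℕ) + 1 < T} => xfull j.1) = xm := by
      funext j
      simp only [hxf]
      rw [dif_pos j.2]
    have hsr : (fun j : {j : Fin (N + 1) // T ≤ (j : ℕ) + v + 1 ∧ (j : ℕ) + u + 1 ≤ T} =>
        sfull j.1) = sm := by
      funext j
      simp only [hsf]
      rw [dif_pos j.2]
    have halp := halpha xfull sfull
    unfold alphaWinEq at halp
    -- rewrite the four sets into canonical form
    have eW : {ω : Traj X S Y N |
          (∀ j : Fin N, ((⟨T - 1, by omega⟩ : Fin N) : ℕ) ≤ (j : ℕ) + v ∧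
              (j : ℕ) < ((⟨T - 1, by omega⟩ : Fin N) : ℕ) → ω.1 j = xfull j) ∧
            ∀ j : Fin (N + 1), ((⟨T - 1, by omega⟩ : Fin N) : ℕ) ≤ (j : ℕ) + v ∧
              (j : ℕ) + u ≤ ((⟨T - 1, by omega⟩ : Fin N) : ℕ) → ω.2.1 j = sfull j}
        = {ω : Traj X S Y N |
            (∀ j : Fin N, T ≤ (j : ℕ) + v + 1 ∧ (j : ℕ) + 1 < T → ω.1 j = xfull j) ∧
              ∀ j : Fin (N + 1), T ≤ (j : ℕ) + v + 1 ∧ (j : ℕ) + u + 1 ≤ T →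
                ω.2.1 j = sfull j} := by
      ext ω
      constructor
      · rintro ⟨H1, H2⟩
        constructor
        · intro j hj
          refine H1 j ?_
          have h1 : ((⟨T - 1, by omega⟩ : Fin N) : ℕ) = T - 1 := rfl
          rw [h1]
          omega
        · intro j hj
          refine H2 j ?_
          have h1 : ((⟨T - 1, by omega⟩ : Fin N) : ℕ) = T - 1 := rfl
          rw [h1]
          omega
      · rintro ⟨H1, H2⟩
        constructor
        · intro j hj
          refine H1 j ?_
          have h1 : ((⟨T - 1, by omega⟩ : Fin N) : ℕ) = T - 1 := rfl
          rw [h1] at hj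
          omega
        · intro j hj
          refine H2 j ?_
          have h1 : ((⟨T - 1, by omega⟩ : Fin N) : ℕ) = T - 1 := rfl
          rw [h1] at hj
          omega
    have eF : ∀ (hy : Fin N → Y), {ω : Traj X S Y N |
          ∀ j : Fin N, (j : ℕ) + u + 1 ≤ ((⟨T - 1, by omega⟩ : Fin N) : ℕ) → ω.2.2 j = hy j}
        = {ω : Traj X S Y N | ∀ j : Fin N, (j : ℕ) + u + 1 < T → ω.2.2 j = hy j} := by
      intro hy
      ext ω
      constructor
      · intro H j hj
        refine H j ?_
        have h1 : ((⟨T - 1, by omega⟩ : Fin N) : ℕ) = T - 1 := rfl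
        rw [h1]
        omega
      · intro H j hj
        refine H j ?_
        have h1 : ((⟨T - 1, by omega⟩ : Fin N) : ℕ) = T - 1 := rfl
        rw [h1] at hj
        omega
    rw [eW, eF yh, eF yh'] at halp
    rw [condPr, condPr] at halp
    rw [prE_W ch src v T hT1 huv hM yh x₀ s₀ y₀ xfull sfull,
      prE_W ch src v T hT1 huv hM yh' x₀ s₀ y₀ xfull sfull, hxr, hsr] at halp
    exact halp
  have hC : ∀ (xm : {j : Fin N // T ≤ (j : ℕ) + v + 1 ∧ (j : ℕ) + 1 < T} → X)
      (sm : {j : Fin (N + 1) // T ≤ (j : ℕ) + v + 1 ∧ (j : ℕ) + u + 1 ≤ T} → S),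
      Cbar ch src v T yh x₀ s₀ xm sm = Cbar ch src v T yh' x₀ s₀ xm sm :=
    fun xm sm => Cbar_hist ch src yh yh' hpol x₀ s₀ xm sm
  have hD : ∀ (xm : {j : Fin N // T ≤ (j : ℕ) + v + 1 ∧ (j : ℕ) + 1 < T} → X)
      (sm : {j : Fin (N + 1) // T ≤ (j : ℕ) + v + 1 ∧ (j : ℕ) + u + 1 ≤ T} → S),
      Dbar ch src v T yh x₀ s₀ xf sf yf xm sm = Dbar ch src v T yh' x₀ s₀ xf sf yf xm sm :=
    fun xm sm => Dbar_hist ch src yh yh' hpol x₀ s₀ xf sf yf xm sm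
  have key : ∀ (xm : {j : Fin N // T ≤ (j : ℕ) + v + 1 ∧ (j : ℕ) + 1 < T} → X)
      (sm : {j : Fin (N + 1) // T ≤ (j : ℕ) + v + 1 ∧ (j : ℕ) + u + 1 ≤ T} → S),
      Abar ch src v T yh x₀ s₀ y₀ xm sm * Dbar ch src v T yh x₀ s₀ xf sf yf xm sm /
          prE (jointP ch src)
            {ω : Traj X S Y N | ∀ j : Fin N, (j : ℕ) + u + 1 < T → ω.2.2 j = yh j}
        = Abar ch src v T yh' x₀ s₀ y₀ xm sm * Dbar ch src v T yh x₀ s₀ xf sf yf xm sm /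
            prE (jointP ch src)
              {ω : Traj X S Y N | ∀ j : Fin N, (j : ℕ) + u + 1 < T → ω.2.2 j = yh' j} := by
    intro xm sm
    by_cases hc : Cbar ch src v T yh x₀ s₀ xm sm = 0
    · have hd : Dbar ch src v T yh x₀ s₀ xf sf yf xm sm = 0 :=
        le_antisymm (hc ▸ Dbar_le_Cbar ch src yh x₀ s₀ xf sf yf xm sm)
          (Dbar_nonneg ch src yh x₀ s₀ xf sf yf xm sm)
      rw [hd]
      simp
    · have e1 := hAlpha xm sm
      rw [← hC xm sm] at e1
      rw [mul_div_right_comm, mul_div_right_comm] at e1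
      have e2 := mul_right_cancel₀ hc e1
      rw [mul_div_right_comm, mul_div_right_comm, e2]
  rw [condPr, condPr,
    prE_E ch src v T hT1 huv hM yh x₀ s₀ y₀ xf sf yf,
    prE_E ch src v T hT1 huv hM yh' x₀ s₀ y₀ xf sf yf,
    Finset.sum_div, Finset.sum_div]
  refine Finset.sum_congr rfl fun xm _ => ?_
  rw [Finset.sum_div, Finset.sum_div]
  refine Finset.sum_congr rfl fun sm _ => ?_
  rw [← hD xm sm]
  exact key xm sm

end FSCPaper
end
end
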